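/- arXiv:0707.2890 — 5 statements merged into one kernel-verified Lean document; each statement's English description precedes it below -/
import Mathlib

section
/- If T is a dense set of rooted triplets on leaf set L(T), then for any subsets A, B of L(T), the intersection SN_T(A) ∩ SN_T(B) equals ∅, SN_T(A), or SN_T(B). -/
namespace Phylo

variable {V : Type*}

/-- In-degree of a vertex in a directed graph given by relation `R`. -/
noncomputable def inDeg (R : V → V → Prop) (v : V) : ℕ := {u | R u v}.ncard

/-- Out-degree of a vertex. -/
noncomputable def outDeg (R : V → V → Prop) (v : V) : ℕ := {w | R v w}.ncard

/-- A phylogenetic network: an acyclic digraph with a unique root of indegree 0 and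
outdegree 2, in which every vertex is the root, a split vertex (indeg 1, outdeg 2),
a recombination vertex (indeg 2, outdeg 1) or a leaf (indeg 1, outdeg 0). -/
def IsPhyloNet (R : V → V → Prop) : Prop :=
  (∀ v, ¬ Relation.TransGen R v v) ∧
  (∃! r, inDeg R r = 0) ∧
  (∀ v : V, (inDeg R v = 0 ∧ outDeg R v = 2) ∨ (inDeg R v = 1 ∧ outDeg R v = 2) ∨
    (inDeg R v = 2 ∧ outDeg R v = 1) ∨ (inDeg R v = 1 ∧ outDeg R v = 0))

/-- A leaf is a vertex of outdegree 0. -/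
def IsLf (R : V → V → Prop) (v : V) : Prop := outDeg R v = 0

/-- The set of leaves of a network. -/
def netLeaves (R : V → V → Prop) : Set V := {v | IsLf R v}

/-- `p` is a directed path (as a nonempty list of vertices) from `a` to `b`. -/
def IsPth (R : V → V → Prop) (p : List V) (a b : V) : Prop :=
  p ≠ [] ∧ p.head? = some a ∧ p.getLast? = some b ∧ p.Chain' R

/-- Internal vertices of a path. -/
def interior (p : List V) : List V := p.tail.dropLast

/-- Two paths are internally vertex-disjoint. -/
def IntDisj (p q : List V) : Prop :=
  (∀ v ∈ interior p, v ∉ q) ∧ (∀ v ∈ interior q, v ∉ p)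

/-- The triplet xy|z is consistent with the network `R`: there are `u ≠ v` and pairwise
internally vertex-disjoint paths `u→x`, `u→y`, `v→u`, `v→z`. -/
def ConsistentTrip (R : V → V → Prop) (x y z : V) : Prop :=
  ∃ u v : V, ∃ p1 p2 p3 p4 : List V, u ≠ v ∧
    IsPth R p1 u x ∧ IsPth R p2 u y ∧ IsPth R p3 v u ∧ IsPth R p4 v z ∧
    IntDisj p1 p2 ∧ IntDisj p1 p3 ∧ IntDisj p1 p4 ∧
    IntDisj p2 p3 ∧ IntDisj p2 p4 ∧ IntDisj p3 p4

/-- `(x,y,z) ∈ T` codes the rooted triplet xy|z; `trip T x y z` says xy|z ∈ T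
(taking into account the symmetry xy|z = yx|z). -/
def trip (T : Set (V × V × V)) (x y z : V) : Prop := (x, y, z) ∈ T ∨ (y, x, z) ∈ T

/-- The leaf set L(T) of a triplet set. -/
def tripLeaves (T : Set (V × V × V)) : Set V :=
  {a | ∃ t ∈ T, a = t.1 ∨ a = t.2.1 ∨ a = t.2.2}

/-- `T` is dense: every 3-element subset of L(T) supports at least one triplet of `T`. -/
def DenseT (T : Set (V × V × V)) : Prop :=
  ∀ x y z, x ∈ tripLeaves T → y ∈ tripLeaves T → z ∈ tripLeaves T →
    x ≠ y → x ≠ z → y ≠ z → trip T x y z ∨ trip T x z y ∨ trip T y z x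

/-- An SN-set of `T`: a subset of L(T) closed under the operation
`S_T(X) = X ∪ {c | ∃ x y ∈ X, xc|y ∈ T}`. -/
def IsSNSet (T : Set (V × V × V)) (Y : Set V) : Prop :=
  Y ⊆ tripLeaves T ∧
    ∀ ⦃c x y : V⦄, x ∈ Y → y ∈ Y → c ∈ tripLeaves T → trip T x c y → c ∈ Y

/-- `SN T X`: the closure of `X` under `S_T`, i.e. the smallest SN-superset of `X`. -/
def SN (T : Set (V × V × V)) (X : Set V) : Set V := ⋂₀ {Y | X ⊆ Y ∧ IsSNSet T Y}

/-- A maximal SN-set: a proper SN-set such that the only SN-set strictly containing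
it is L(T) itself. -/
def MaxSN (T : Set (V × V × V)) (S : Set V) : Prop :=
  IsSNSet T S ∧ S ≠ tripLeaves T ∧ ∀ Y, IsSNSet T Y → S ⊂ Y → Y = tripLeaves T

/-- A network is consistent with a triplet set if it is consistent with every triplet. -/
def ConsistentSet (R : V → V → Prop) (T : Set (V × V × V)) : Prop :=
  ∀ t ∈ T, ConsistentTrip R t.1 t.2.1 t.2.2

/-- A cut-arc: an arc whose removal disconnects the underlying undirected graph. -/
def CutArc (R : V → V → Prop) (u v : V) : Prop :=
  R u v ∧ ∃ a b : V, ¬ Relation.ReflTransGen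
    (fun p q => (R p q ∨ R q p) ∧ ¬((p = u ∧ q = v) ∨ (p = v ∧ q = u))) a b

/-- The set of leaves below the arc `(u,v)`: leaves reachable from `v`. -/
def leavesBelow (R : V → V → Prop) (u v : V) : Set V :=
  {ℓ | IsLf R ℓ ∧ Relation.ReflTransGen R v ℓ}

/-- A highest cut-arc: a cut-arc `(u,v)` such that there is no cut-arc `(u',v')`
with `u` reachable from `v'`. -/
def HighestCutArc (R : V → V → Prop) (u v : V) : Prop :=
  CutArc R u v ∧ ∀ u' v', CutArc R u' v' → ¬ Relation.ReflTransGen R v' u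

/-- The subset `S` is connected in the underlying undirected graph. -/
def ConnOn (R : V → V → Prop) (S : Set V) : Prop :=
  ∀ a ∈ S, ∀ b ∈ S,
    Relation.ReflTransGen (fun p q => p ∈ S ∧ q ∈ S ∧ (R p q ∨ R q p)) a b

/-- `S` induces a biconnected subgraph containing at least one arc. -/
def BiconnSet (R : V → V → Prop) (S : Set V) : Prop :=
  (∃ a ∈ S, ∃ b ∈ S, R a b) ∧ ConnOn R S ∧ ∀ w ∈ S, ConnOn R (S \ {w})

/-- A biconnected component: a maximal biconnected vertex set. -/
def IsBCC (R : V → V → Prop) (S : Set V) : Prop :=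
  BiconnSet R S ∧ ∀ S', BiconnSet R S' → S ⊆ S' → S' = S

/-- A level-k network: every biconnected component has at most `k` recombination
vertices. -/
def LevelK (k : ℕ) (R : V → V → Prop) : Prop :=
  ∀ S, IsBCC R S → ({v ∈ S | inDeg R v = 2}).ncard ≤ k

/-- A valid (non-redundant) network: every nontrivial biconnected component has at
least three outgoing arcs. -/
def GoodNet (R : V → V → Prop) : Prop :=
  IsPhyloNet R ∧ ∀ S, IsBCC R S → 3 ≤ S.ncard →
    3 ≤ {p : V × V | R p.1 p.2 ∧ p.1 ∈ S ∧ p.2 ∉ S}.ncard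

end Phylo

open Phylo in
private lemma snSubLeaves {V : Type*} (T : Set (V × V × V)) {A : Set V}
    (hA : A ⊆ tripLeaves T) : IsSNSet T (SN T A) ∧ A ⊆ SN T A := by
  have hL : (tripLeaves T) ∈ {Y | A ⊆ Y ∧ IsSNSet T Y} :=
    ⟨hA, subset_rfl, fun c x y _ _ hc _ => hc⟩
  constructor
  · constructor
    · exact fun v hv => hv _ hL
    · intro c x y hx hy hc htr Y hY
      exact hY.2.2 (hx Y hY) (hy Y hY) hc htr
  · intro a ha Y hY
    exact hY.1 ha

open Phylo in
private lemma snNested {V : Type*} {T : Set (V × V × V)} (hdense : DenseT T)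
    {A B : Set V} (hA : A ⊆ tripLeaves T) (hB : B ⊆ tripLeaves T)
    {z : V} (hzA : z ∈ SN T A) (hzB : z ∈ SN T B) :
    SN T A ⊆ SN T B ∨ SN T B ⊆ SN T A := by
  obtain ⟨hSA, -⟩ := snSubLeaves T hA
  obtain ⟨hSB, -⟩ := snSubLeaves T hB
  by_contra h
  rw [not_or] at h
  obtain ⟨x, hxA, hxB⟩ := Set.not_subset.mp h.1
  obtain ⟨y, hyB, hyA⟩ := Set.not_subset.mp h.2
  have hxL : x ∈ tripLeaves T := hSA.1 hxA
  have hyL : y ∈ tripLeaves T := hSB.1 hyB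
  have hzL : z ∈ tripLeaves T := hSA.1 hzA
  have hxy : x ≠ y := fun e => hxB (e ▸ hyB)
  have hxz : x ≠ z := fun e => hxB (e ▸ hzB)
  have hyz : y ≠ z := fun e => hyA (e ▸ hzA)
  rcases hdense x y z hxL hyL hzL hxy hxz hyz with ht | ht | ht
  · -- xy|z : x, z ∈ SN A ⇒ y ∈ SN A
    exact hyA (hSA.2 hxA hzA hyL ht)
  · -- xz|y : trip T x z y; symmetric trip T z x y; z, y ∈ SN B ⇒ x ∈ SN B
    exact hxB (hSB.2 hzB hyB hxL (ht.symm))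
  · -- yz|x : trip T y z x; symmetric: z, x ∈ SN A ⇒ y ∈ SN A
    exact hyA (hSA.2 hzA hxA hyL (ht.symm))

open Phylo in
/-- If `T` is dense, then for any `A B ⊆ L(T)`,
`SN T A ∩ SN T B` equals `∅`, `SN T A` or `SN T B`. -/
theorem stmt0 {V : Type*} (T : Set (V × V × V)) (hdense : DenseT T)
    (A B : Set V) (hA : A ⊆ tripLeaves T) (hB : B ⊆ tripLeaves T) :
    SN T A ∩ SN T B = ∅ ∨ SN T A ∩ SN T B = SN T A ∨ SN T A ∩ SN T B = SN T B := by
  rcases Set.eq_empty_or_nonempty (SN T A ∩ SN T B) with he | ⟨z, hzA, hzB⟩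
  · exact Or.inl he
  rcases snNested hdense hA hB hzA hzB with hs | hs
  · exact Or.inr (Or.inl (Set.inter_eq_left.mpr hs))
  · exact Or.inr (Or.inr (Set.inter_eq_right.mpr hs))
end

section
/- Let N be a phylogenetic network consistent with a dense triplet set T. Then for each cut-arc a of N, the set S of leaves below a is an SN-set of T. -/
/-!
Let `B` be the set of vertices below `v`. Since the network has a single root and `(u, v)` is
a cut-arc, every arc entering `B` starts at `u`: otherwise `B` would still be connected to the
root after deleting `(u, v)`. Now let `xc|y ∈ T` with `x, y ∈ B`, witnessed by vertices `u₀ ≠ v₀`.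
If `c ∉ B`, then neither `u₀` nor `v₀` is in `B`, so both paths `u₀ → x` and `v₀ → y` enter `B`
through `u`. Internal disjointness of these two paths forces `u = u₀ = v₀`, a contradiction.
-/

namespace Phylo

open Relation

variable {V : Type*} {R : V → V → Prop}

theorem IsPth.reflTransGen {p : List V} {a b : V} (h : IsPth R p a b) : ReflTransGen R a b := by
  obtain ⟨hne, ha, hb, hchain⟩ := h
  rw [List.head?_eq_some_head hne, Option.some_inj] at ha
  rw [List.getLast?_eq_some_getLast hne, Option.some_inj] at hb
  exact ha ▸ hb ▸ List.relationReflTransGen_of_exists_isChain p hchain hne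

theorem IsPth.mem_of_head_mem {B : Set V} (hB : ∀ s t, R s t → s ∈ B → t ∈ B) {p : List V}
    {a b : V} (h : IsPth R p a b) (ha : a ∈ B) : b ∈ B := by
  have hab := h.reflTransGen
  clear h
  induction hab with
  | refl => exact ha
  | tail _ hst ih => exact hB _ _ hst ih

theorem IsPth.exists_entry {B : Set V} :
    ∀ {p : List V} {a b : V}, IsPth R p a b → a ∉ B → b ∈ B →
      ∃ s ∈ p.dropLast, ∃ t, R s t ∧ s ∉ B ∧ t ∈ B
  | [], _, _, h, _, _ => absurd rfl h.1
  | [w], _, _, ⟨_, ha, hb, _⟩, haB, hbB => by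
      simp only [List.head?_cons, List.getLast?_singleton, Option.some_inj] at ha hb
      exact absurd (ha ▸ hb ▸ hbB) haB
  | w :: w' :: rest, _, _, ⟨_, ha, hb, hchain⟩, haB, hbB => by
      simp only [List.head?_cons, Option.some_inj] at ha
      subst ha
      replace hchain : R w w' ∧ List.IsChain R (w' :: rest) := List.isChain_cons_cons.mp hchain
      rw [List.dropLast_cons_cons]
      by_cases hw' : w' ∈ B
      · exact ⟨w, List.mem_cons_self, w', hchain.1, haB, hw'⟩
      · rw [List.getLast?_cons_cons] at hb
        obtain ⟨s, hs, hentry⟩ :=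
          IsPth.exists_entry ⟨List.cons_ne_nil _ _, rfl, hb, hchain.2⟩ hw' hbB
        exact ⟨s, List.mem_cons_of_mem _ hs, hentry⟩

theorem IsPth.eq_or_mem_interior {p : List V} {a b s : V} (h : IsPth R p a b)
    (hs : s ∈ p.dropLast) : s = a ∨ s ∈ interior p := by
  obtain ⟨-, ha, -, -⟩ := h
  obtain ⟨tl, rfl⟩ := List.head?_eq_some_iff.mp ha
  cases tl with
  | nil => simp at hs
  | cons t ts => simpa [interior, List.dropLast_cons_cons] using hs

theorem ConsistentTrip.swap {x y z : V} (h : ConsistentTrip R x y z) :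
    ConsistentTrip R y x z := by
  obtain ⟨u, v, p1, p2, p3, p4, hne, h1, h2, h3, h4, d12, d13, d14, d23, d24, d34⟩ := h
  exact ⟨u, v, p2, p1, p3, p4, hne, h2, h1, h3, h4, ⟨d12.2, d12.1⟩, d23, d24, d13, d14, d34⟩

theorem ConsistentSet.consistentTrip_of_trip {T : Set (V × V × V)} (h : ConsistentSet R T)
    {x y z : V} (ht : trip T x y z) : ConsistentTrip R x y z :=
  ht.elim (h _) fun ht => (h _ ht).swap

theorem ConsistentTrip.mem_of_entry_eq {B : Set V} {u x c y : V}
    (hB : ∀ s t, R s t → s ∈ B → t ∈ B) (hentry : ∀ s t, R s t → s ∉ B → t ∈ B → s = u)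
    (h : ConsistentTrip R x c y) (hx : x ∈ B) (hy : y ∈ B) : c ∈ B := by
  obtain ⟨u₀, v₀, p1, p2, p3, p4, hne, h1, h2, h3, h4, -, -, d14, -, -, -⟩ := h
  by_contra hc
  have hu₀ : u₀ ∉ B := fun h => hc (h2.mem_of_head_mem hB h)
  have hv₀ : v₀ ∉ B := fun h => hu₀ (h3.mem_of_head_mem hB h)
  obtain ⟨s₁, hs₁, t₁, hst₁, hs₁B, ht₁B⟩ := h1.exists_entry hu₀ hx
  obtain ⟨s₄, hs₄, t₄, hst₄, hs₄B, ht₄B⟩ := h4.exists_entry hv₀ hy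
  obtain rfl := hentry _ _ hst₁ hs₁B ht₁B
  obtain rfl := hentry _ _ hst₄ hs₄B ht₄B
  rcases h1.eq_or_mem_interior hs₁ with rfl | hint₁
  · rcases h4.eq_or_mem_interior hs₄ with rfl | hint₄
    · exact hne rfl
    · exact d14.2 _ hint₄ (List.mem_of_mem_dropLast hs₁)
  · exact d14.1 _ hint₁ (List.mem_of_mem_dropLast hs₄)

theorem IsPhyloNet.wellFounded [Finite V] (hnet : IsPhyloNet R) : WellFounded R :=
  have : Std.Irrefl (TransGen R) := ⟨hnet.1⟩
  Subrelation.wf TransGen.single (Finite.wellFounded_of_trans_of_irrefl _)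

theorem IsPhyloNet.exists_forall_reflTransGen_within [Finite V] (hnet : IsPhyloNet R)
    {P : V → Prop} (hP : ∀ s w, R s w → P w → P s) :
    ∃ r, ∀ w, P w → ReflTransGen (fun s t => R s t ∧ P t) r w := by
  obtain ⟨r, -, hr⟩ := hnet.2.1
  refine ⟨r, fun w hw => ?_⟩
  induction w using hnet.wellFounded.induction with
  | _ w ih =>
    by_cases hsource : ∀ s, ¬ R s w
    · rw [hr w (by simp [inDeg, hsource])]
    · push Not at hsource
      obtain ⟨s, hs⟩ := hsource
      exact (ih s hs (hP s w hs hw)).tail ⟨hs, hw⟩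

theorem reflTransGen_within_reach {a b : V} (h : ReflTransGen R a b) :
    ReflTransGen (fun s t => R s t ∧ ReflTransGen R a s) a b := by
  induction h with
  | refl => exact .refl
  | tail hab hbc ih => exact ih.tail ⟨hbc, hab⟩

def underlyingWithoutArc (R : V → V → Prop) (u v : V) (p q : V) : Prop :=
  (R p q ∨ R q p) ∧ ¬((p = u ∧ q = v) ∨ (p = v ∧ q = u))

instance {u v : V} : Std.Symm (underlyingWithoutArc R u v) :=
  ⟨fun _ _ h => ⟨h.1.symm, fun h' => h.2 (by tauto)⟩⟩

theorem CutArc.eq_of_entry [Finite V] (hnet : IsPhyloNet R) {u v : V} (hcut : CutArc R u v)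
    {p q : V} (hpq : R p q) (hp : ¬ ReflTransGen R v p) (hq : ReflTransGen R v q) : p = u := by
  obtain ⟨huv, a, b, hab⟩ := hcut
  change ¬ ReflTransGen (underlyingWithoutArc R u v) a b at hab
  by_contra hpu
  have hu : ¬ ReflTransGen R v u := fun h => hnet.1 v (TransGen.tail' h huv)
  obtain ⟨r, hr⟩ := hnet.exists_forall_reflTransGen_within (P := (¬ ReflTransGen R v ·))
    fun s w hsw hw hs => hw (hs.tail hsw)
  have outside (w) (hw : ¬ ReflTransGen R v w) :
      ReflTransGen (underlyingWithoutArc R u v) r w :=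
    ReflTransGen.mono (fun s t (⟨hst, ht⟩ : R s t ∧ _) => ⟨.inl hst, fun h => ht <| by
      rcases h with ⟨-, rfl⟩ | ⟨rfl, -⟩
      exacts [.refl, .single hst]⟩) _ _ (hr w hw)
  have inside (w) (hw : ReflTransGen R v w) :
      ReflTransGen (underlyingWithoutArc R u v) v w :=
    ReflTransGen.mono (fun s t (⟨hst, hs⟩ : R s t ∧ _) => ⟨.inl hst, fun h => hu <| by
      rcases h with ⟨rfl, -⟩ | ⟨-, rfl⟩
      exacts [hs, hs.tail hst]⟩) _ _ (reflTransGen_within_reach hw)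
  have hpq' : underlyingWithoutArc R u v p q := ⟨.inl hpq, by
    rintro (⟨rfl, -⟩ | ⟨rfl, -⟩)
    exacts [hpu rfl, hp .refl]⟩
  have hrv : ReflTransGen (underlyingWithoutArc R u v) r v :=
    ((outside p hp).tail hpq').trans (symm (inside q hq))
  have hconn (w) : ReflTransGen (underlyingWithoutArc R u v) r w := by
    by_cases hw : ReflTransGen R v w
    exacts [hrv.trans (inside w hw), outside w hw]
  exact hab ((symm (hconn a)).trans (hconn b))

end Phylo

open Phylo in
theorem stmt3_general {V : Type*} [Fintype V] (R : V → V → Prop) (T : Set (V × V × V))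
    (hnet : IsPhyloNet R) (hcons : ConsistentSet R T)
    (hL : netLeaves R = tripLeaves T) (u v : V) (hcut : CutArc R u v) :
    IsSNSet T (leavesBelow R u v) := by
  refine ⟨fun ℓ hℓ => hL ▸ hℓ.1, fun c x y hx hy hc hxcy => ?_⟩
  refine ⟨show c ∈ netLeaves R from hL ▸ hc, ?_⟩
  exact (hcons.consistentTrip_of_trip hxcy).mem_of_entry_eq
    (B := {w | Relation.ReflTransGen R v w}) (fun _ _ hst hs => hs.tail hst)
    (fun _ _ => hcut.eq_of_entry hnet) hx.2 hy.2

open Phylo in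
/-- If the network `R` is consistent with the dense triplet set `T`
(with `L(N) = L(T)`), then for each cut-arc `(u,v)` of `R`, the set of leaves below
it is an SN-set of `T`. -/
theorem stmt3 {V : Type*} [Fintype V] (R : V → V → Prop) (T : Set (V × V × V))
    (hnet : IsPhyloNet R) (hdense : DenseT T) (hcons : ConsistentSet R T)
    (hL : netLeaves R = tripLeaves T) (u v : V) (hcut : CutArc R u v) :
    IsSNSet T (leavesBelow R u v) :=
  stmt3_general R T hnet hcons hL u v hcut
end

section
/- In a phylogenetic network, the sets of leaves below the highest cut-arcs partition the leaf set. -/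
namespace Phylo

open Relation

variable {V : Type*} {R : V → V → Prop}

/-- `CutArc R u v` unfolds to `R u v ∧ ∃ a b, ¬ ReflTransGen (deleteArcAdj R u v) a b`. -/
def deleteArcAdj (R : V → V → Prop) (u v : V) (p q : V) : Prop :=
  (R p q ∨ R q p) ∧ ¬((p = u ∧ q = v) ∨ (p = v ∧ q = u))

instance (u v : V) : Std.Symm (deleteArcAdj R u v) where
  symm _ _ h := ⟨h.1.symm, fun h' => h.2 (by tauto)⟩

lemma reflTransGen_deleteArcAdj_or_through_arc (u v : V) {a x : V}
    (h : ReflTransGen R a x) :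
    ReflTransGen (deleteArcAdj R u v) a x ∨ ReflTransGen R a u ∧ ReflTransGen R v x := by
  induction h with
  | refl => exact .inl .refl
  | @tail p y hap hpy ih =>
    rcases ih with hE | ⟨hau, hvp⟩
    · by_cases hArc : (p = u ∧ y = v) ∨ (p = v ∧ y = u)
      · rcases hArc with ⟨rfl, rfl⟩ | ⟨rfl, rfl⟩
        · exact .inr ⟨hap, .refl⟩
        · exact .inr ⟨hap.tail hpy, .single hpy⟩
      · exact .inl (hE.tail ⟨.inl hpy, hArc⟩)
    · exact .inr ⟨hau, hvp.tail hpy⟩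

lemma reflTransGen_deleteArcAdj_of_not_reach_tail {u v a x : V} (h : ReflTransGen R a x)
    (hu : ¬ ReflTransGen R a u) : ReflTransGen (deleteArcAdj R u v) a x :=
  (reflTransGen_deleteArcAdj_or_through_arc u v h).resolve_right fun h' => hu h'.1

lemma reflTransGen_deleteArcAdj_of_not_head_reach {u v a x : V} (h : ReflTransGen R a x)
    (hv : ¬ ReflTransGen R v x) : ReflTransGen (deleteArcAdj R u v) a x :=
  (reflTransGen_deleteArcAdj_or_through_arc u v h).resolve_right fun h' => hv h'.2

lemma not_reflTransGen_of_rel (hacyc : ∀ v, ¬ TransGen R v v) {u v : V} (h : R u v) :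
    ¬ ReflTransGen R v u :=
  fun h' => hacyc u (TransGen.head' h h')

lemma wellFounded_transGen [Finite V] (hacyc : ∀ v, ¬ TransGen R v v) :
    WellFounded (TransGen R) :=
  haveI : Std.Irrefl (TransGen R) := ⟨hacyc⟩
  Finite.wellFounded_of_trans_of_irrefl _

lemma IsPhyloNet.exists_forall_reflTransGen [Finite V] (hnet : IsPhyloNet R) :
    ∃ r, ∀ x, ReflTransGen R r x := by
  obtain ⟨r, -, hr⟩ := hnet.2.1
  refine ⟨r, fun x => ?_⟩
  induction x using (wellFounded_transGen hnet.1).induction with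
  | _ x ih =>
    by_cases hx : inDeg R x = 0
    · rw [hr x hx]
    · obtain ⟨u, hu⟩ : ∃ u, R u x := Set.nonempty_of_ncard_ne_zero hx
      exact (ih u (.single hu)).tail hu

lemma IsPhyloNet.exists_cutArc_of_isLf [Finite V] (hnet : IsPhyloNet R) {ℓ : V}
    (hℓ : IsLf R ℓ) : ∃ u, CutArc R u ℓ := by
  have hin : inDeg R ℓ = 1 := by
    unfold IsLf at hℓ
    rcases hnet.2.2 ℓ with ⟨-, h⟩ | ⟨-, h⟩ | ⟨-, h⟩ | ⟨h, -⟩ <;> omega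
  obtain ⟨u, hu⟩ := Set.ncard_eq_one.mp hin
  have hRu : R u ℓ := (Set.ext_iff.mp hu u).mpr rfl
  have hno_out : ∀ w, ¬ R ℓ w := fun w hw =>
    ((Set.ncard_eq_zero (Set.toFinite _)).mp hℓ).subset hw
  have hisolated : ∀ w, ¬ deleteArcAdj R u ℓ ℓ w := by
    rintro w ⟨hw | hw, hne⟩
    · exact hno_out w hw
    · exact hne (.inr ⟨rfl, (Set.ext_iff.mp hu w).mp hw⟩)
  refine ⟨u, hRu, ℓ, u, fun h => ?_⟩
  rcases h.cases_head with rfl | ⟨w, hw, -⟩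
  · exact hno_out ℓ hRu
  · exact hisolated w hw

lemma CutArc.not_reflTransGen_deleteArcAdj (hacyc : ∀ v, ¬ TransGen R v v) {r : V}
    (hroot : ∀ x, ReflTransGen R r x) {u v : V} (h : CutArc R u v) :
    ¬ ReflTransGen (deleteArcAdj R u v) u v := by
  obtain ⟨huv, a, b, hab⟩ := h
  intro hconn
  have hvu := not_reflTransGen_of_rel hacyc huv
  have hrx : ∀ x, ReflTransGen (deleteArcAdj R u v) r x := by
    intro x
    by_cases hvx : ReflTransGen R v x
    · exact ((reflTransGen_deleteArcAdj_of_not_head_reach (hroot u) hvu).trans hconn).trans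
        (reflTransGen_deleteArcAdj_of_not_reach_tail hvx hvu)
    · exact reflTransGen_deleteArcAdj_of_not_head_reach (hroot x) hvx
  exact hab ((symm (hrx a)).trans (hrx b))

lemma exists_highestCutArc_above [Finite V] (hacyc : ∀ v, ¬ TransGen R v v) {u v : V}
    (h : CutArc R u v) : ∃ u₀ v₀, HighestCutArc R u₀ v₀ ∧ ReflTransGen R v₀ v := by
  obtain ⟨u₀, ⟨v₀, hcut₀, hv₀⟩, hmin⟩ := (wellFounded_transGen hacyc).has_min
    {w | ∃ z, CutArc R w z ∧ ReflTransGen R z v} ⟨u, v, h, .refl⟩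
  refine ⟨u₀, v₀, ⟨hcut₀, fun u' v' hcut' hv'u₀ => ?_⟩, hv₀⟩
  exact hmin u' ⟨v', hcut', hv'u₀.trans ((ReflTransGen.single hcut₀.1).trans hv₀)⟩
    (TransGen.head' hcut'.1 hv'u₀)

lemma HighestCutArc.eq_of_reflTransGen (hacyc : ∀ v, ¬ TransGen R v v) {r : V}
    (hroot : ∀ x, ReflTransGen R r x) {u₁ v₁ u₂ v₂ x : V} (h₁ : HighestCutArc R u₁ v₁)
    (h₂ : HighestCutArc R u₂ v₂) (hx₁ : ReflTransGen R v₁ x) (hx₂ : ReflTransGen R v₂ x) :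
    (u₁, v₁) = (u₂, v₂) := by
  by_contra hne
  have hv₁u₁ := not_reflTransGen_of_rel hacyc h₁.1.1
  have hru₁ : ReflTransGen (deleteArcAdj R u₁ v₁) r u₁ :=
    reflTransGen_deleteArcAdj_of_not_head_reach (hroot u₁) hv₁u₁
  have hru₂ : ReflTransGen (deleteArcAdj R u₁ v₁) r u₂ :=
    reflTransGen_deleteArcAdj_of_not_head_reach (hroot u₂) (h₂.2 u₁ v₁ h₁.1)
  have hu₂v₂ : deleteArcAdj R u₁ v₁ u₂ v₂ := by
    refine ⟨.inl h₂.1.1, ?_⟩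
    rintro (⟨rfl, rfl⟩ | ⟨rfl, rfl⟩)
    · exact hne rfl
    · exact hv₁u₁ (.single h₂.1.1)
  have hv₂x : ReflTransGen (deleteArcAdj R u₁ v₁) v₂ x :=
    reflTransGen_deleteArcAdj_of_not_reach_tail hx₂ (h₁.2 u₂ v₂ h₂.1)
  have hv₁x : ReflTransGen (deleteArcAdj R u₁ v₁) v₁ x :=
    reflTransGen_deleteArcAdj_of_not_reach_tail hx₁ hv₁u₁
  exact h₁.1.not_reflTransGen_deleteArcAdj hacyc hroot
    ((((symm hru₁).trans hru₂).trans ((ReflTransGen.single hu₂v₂).trans hv₂x)).trans (symm hv₁x))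

end Phylo

open Phylo in
/-- In a phylogenetic network, the sets of leaves below the highest
cut-arcs partition the leaf set: every leaf lies below exactly one highest cut-arc. -/
theorem stmt4 {V : Type*} [Fintype V] (R : V → V → Prop) (hnet : IsPhyloNet R) :
    ∀ ℓ : V, IsLf R ℓ →
      ∃! p : V × V, HighestCutArc R p.1 p.2 ∧ ℓ ∈ leavesBelow R p.1 p.2 := by
  intro ℓ hℓ
  obtain ⟨r, hroot⟩ := hnet.exists_forall_reflTransGen
  obtain ⟨u, hcut⟩ := hnet.exists_cutArc_of_isLf hℓ
  obtain ⟨u₀, v₀, hhigh, hv₀⟩ := exists_highestCutArc_above hnet.1 hcut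
  refine ⟨(u₀, v₀), ⟨hhigh, hℓ, hv₀⟩, ?_⟩
  rintro ⟨u₁, v₁⟩ ⟨h₁, -, hv₁⟩
  exact h₁.eq_of_reflTransGen hnet.1 hroot hhigh hv₁ hv₀
end

section
/- A strict level-k phylogenetic network (k ≥ 1) is a simple level-k network if and only if it contains no nontrivial cut-arcs. -/
namespace Phylo

/-- A directed multigraph, given by an edge type with source and target maps. -/
structure MultiDigraph : Type 1 where
  W : Type
  E : Type
  src : E → W
  tgt : E → W

/-- Adjacency in a multigraph. -/
def mAdj (G : MultiDigraph) (a b : G.W) : Prop := ∃ e, G.src e = a ∧ G.tgt e = b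

/-- In-degree in a multigraph (counting multiplicities). -/
noncomputable def mInDeg (G : MultiDigraph) (v : G.W) : ℕ := {e | G.tgt e = v}.ncard

/-- Out-degree in a multigraph (counting multiplicities). -/
noncomputable def mOutDeg (G : MultiDigraph) (v : G.W) : ℕ := {e | G.src e = v}.ncard

/-- A simple level-k generator: a finite biconnected acyclic multigraph with a unique
root (indeg 0, outdeg 2), exactly `k` recombination vertices (indeg 2, outdeg ≤ 1),
all other vertices being split vertices (indeg 1, outdeg 2). -/
def IsGenerator (k : ℕ) (G : MultiDigraph) : Prop :=
  Finite G.W ∧ Finite G.E ∧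
  (∀ v, ¬ Relation.TransGen (mAdj G) v v) ∧
  (∀ a b : G.W, Relation.ReflTransGen (fun p q => mAdj G p q ∨ mAdj G q p) a b) ∧
  (∀ w a b : G.W, a ≠ w → b ≠ w →
    Relation.ReflTransGen (fun p q => p ≠ w ∧ q ≠ w ∧ (mAdj G p q ∨ mAdj G q p)) a b) ∧
  (∃! r, mInDeg G r = 0) ∧
  {v | mInDeg G v = 2}.ncard = k ∧
  (∀ v : G.W, (mInDeg G v = 0 ∧ mOutDeg G v = 2) ∨
    (mInDeg G v = 2 ∧ mOutDeg G v ≤ 1) ∨ (mInDeg G v = 1 ∧ mOutDeg G v = 2))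

/-- Isomorphism of multigraphs. -/
def MIso (G H : MultiDigraph) : Prop :=
  ∃ (f : G.W → H.W) (g : G.E → H.E), Function.Bijective f ∧ Function.Bijective g ∧
    (∀ e, H.src (g e) = f (G.src e)) ∧ (∀ e, H.tgt (g e) = f (G.tgt e))

variable {V : Type*}

/-- `a` and `b` are consecutive in the list `l`. -/
def Adjac (l : List V) (a b : V) : Prop := ∃ l1 l2, l = l1 ++ a :: b :: l2

/-- The path in the network replacing the generator arc `e`. -/
def fullPath (G : MultiDigraph) (φ : G.W → V) (ψ : G.E → List V) (e : G.E) : List V :=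
  φ (G.src e) :: ψ e ++ [φ (G.tgt e)]

/-- The network `R` is obtained from the generator `G` by the leaf-hanging
transformation: each arc of `G` is replaced by a path, every internal vertex of such
a path gets a new leaf child, and every indeg-2 outdeg-0 generator vertex gets a new
leaf child; these account for all vertices and arcs of `R`. -/
def SimpleFrom (G : MultiDigraph) (R : V → V → Prop) : Prop :=
  IsPhyloNet R ∧
  ∃ (φ : G.W → V) (ψ : G.E → List V),
    Function.Injective φ ∧
    (∀ e, (fullPath G φ ψ e).Chain' R) ∧
    (∀ e, (ψ e).Nodup) ∧
    (∀ e e', e ≠ e' → ∀ x ∈ ψ e, x ∉ ψ e') ∧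
    (∀ e, ∀ x ∈ ψ e, ∀ w, x ≠ φ w) ∧
    (∀ e, ∀ x ∈ ψ e, ∃ ℓ, IsLf R ℓ ∧ R x ℓ) ∧
    (∀ w, mInDeg G w = 2 → mOutDeg G w = 0 → ∃ ℓ, IsLf R ℓ ∧ R (φ w) ℓ) ∧
    (∀ v : V, (∃ w, v = φ w) ∨ (∃ e, v ∈ ψ e) ∨ IsLf R v) ∧
    (∀ a b : V, R a b → (∃ e, Adjac (fullPath G φ ψ e) a b) ∨
      (IsLf R b ∧ ((∃ e, a ∈ ψ e) ∨ ∃ w, mInDeg G w = 2 ∧ mOutDeg G w = 0 ∧ a = φ w)))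

/-- A simple level-k network: one obtained from some simple level-k generator by
leaf hanging. -/
def SimpleLevel (k : ℕ) (R : V → V → Prop) : Prop :=
  ∃ G : MultiDigraph, IsGenerator k G ∧ SimpleFrom G R

/-- The basic tree: a root with exactly two leaf children. -/
def BasicTree (R : V → V → Prop) : Prop :=
  ∃ r a b : V, r ≠ a ∧ r ≠ b ∧ a ≠ b ∧ (∀ v : V, v = r ∨ v = a ∨ v = b) ∧
    ∀ x y : V, R x y ↔ (x = r ∧ (y = a ∨ y = b))

/-- A simple level-≤2 network: a basic tree, a simple level-1 network or a simple
level-2 network. -/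
def SimpleLE2 (R : V → V → Prop) : Prop :=
  BasicTree R ∨ SimpleLevel 1 R ∨ SimpleLevel 2 R

end Phylo

/-!
A nontrivial cut-arc of a simple network lies on the path replacing a single edge of the
generator. The paths of all other edges survive its removal, no edge of a biconnected
generator is a bridge, and the path through the arc breaks into two pieces hanging on the ends
of its edge, so the network stays connected.

Conversely, suppose that every cut-arc ends in a leaf. A non-leaf vertex has degree at most
three and none of the arcs between non-leaves is a bridge, so no vertex disconnects the
non-leaf part: it is a single biconnected component, which holds every recombination vertex,
and strictness of the level makes their number exactly `k`. A split vertex with a leaf child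
has one parent and exactly one non-leaf child, so such vertices form chains. Contracting the
chains and dropping the leaves leaves a generator, which inherits acyclicity, degrees and
biconnectivity from the network, and hanging the leaves back on its edges gives the network.
-/

namespace Relation

variable {α : Type*} {P : α → α → Prop}

theorem ReflTransGen.symm_of (hP : ∀ a b, P a b → P b a) {a b : α} (h : ReflTransGen P a b) :
    ReflTransGen P b a := by
  induction h with
  | refl => exact .refl
  | tail _ hstep ih => exact .head (hP _ _ hstep) ih

theorem ReflTransGen.mem_of_closed {A : Set α} (hA : ∀ x ∈ A, ∀ y, P x y → y ∈ A) {a b : α}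
    (h : ReflTransGen P a b) (ha : a ∈ A) : b ∈ A := by
  induction h with
  | refl => exact ha
  | tail _ hstep ih => exact hA _ ih _ hstep

theorem ReflTransGen.avoid_pendant (hP : ∀ a b, P a b → P b a) {S : Set α}
    (hS : ∀ x ∈ S, ∃ n ∉ S, ∀ y, P x y → y = n) {a b : α} (h : ReflTransGen P a b)
    (ha : a ∉ S) (hb : b ∉ S) : ReflTransGen (fun p q => P p q ∧ p ∉ S ∧ q ∉ S) a b := by
  classical
  choose! nb hnbS hnb using hS
  suffices ∀ c, ReflTransGen P a c →
      ReflTransGen (fun p q => P p q ∧ p ∉ S ∧ q ∉ S) a (if c ∈ S then nb c else c) by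
    simpa [hb] using this b h
  intro c hc
  induction hc with
  | refl => simpa [ha] using ReflTransGen.refl
  | @tail c d _ hcd ih =>
    by_cases hc : c ∈ S <;> by_cases hd : d ∈ S <;> simp only [hc, hd, if_true, if_false] at ih ⊢
    · exact absurd hd (hnb c hc d hcd ▸ hnbS c hc)
    · rwa [hnb c hc d hcd]
    · rwa [← hnb d hd c (hP _ _ hcd)]
    · exact ih.tail ⟨hcd, hc, hd⟩

theorem ReflTransGen.exists_last_step {v : α} {a : α} (h : ReflTransGen P a v) (ha : a ≠ v) :
    ∃ z, ReflTransGen (fun p q => P p q ∧ p ≠ v ∧ q ≠ v) a z ∧ z ≠ v ∧ P z v := by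
  induction h using ReflTransGen.head_induction_on with
  | refl => exact absurd rfl ha
  | @head a c hac _ ih =>
    by_cases hc : c = v
    · exact ⟨a, .refl, ha, hc ▸ hac⟩
    · obtain ⟨z, hwalk, hz, hzv⟩ := ih hc
      exact ⟨z, .head ⟨hac, ha, hc⟩ hwalk, hz, hzv⟩

/-- Each neighbour of `v` reaches a different neighbour while avoiding `v`; among at most
three neighbours this links them all. -/
theorem ReflTransGen.avoid_of_not_bridge (hP : ∀ a b, P a b → P b a) {S : Set α}
    (hS : ∀ a ∈ S, ∀ b ∈ S, ReflTransGen P a b) {v n₁ n₂ n₃ : α} (hv : v ∈ S) (hvv : ¬ P v v)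
    (hnbr : ∀ y, P v y → y = n₁ ∨ y = n₂ ∨ y = n₃)
    (hbridge : ∀ n, P v n →
      ReflTransGen (fun x y => P x y ∧ ¬(x = v ∧ y = n ∨ x = n ∧ y = v)) n v)
    {a b : α} (ha : a ∈ S) (hb : b ∈ S) (hav : a ≠ v) (hbv : b ≠ v) :
    ReflTransGen (fun x y => P x y ∧ x ≠ v ∧ y ≠ v) a b := by
  set C := ReflTransGen (fun x y => P x y ∧ x ≠ v ∧ y ≠ v)
  have hC : ∀ {x y}, C x y → C y x :=
    ReflTransGen.symm_of fun x y h => ⟨hP _ _ h.1, h.2.2, h.2.1⟩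
  have to_nbr : ∀ x ∈ S, x ≠ v → ∃ z, P v z ∧ C x z := fun x hx hxv => by
    obtain ⟨z, hw, -, hzv⟩ := (hS x hx v hv).exists_last_step hxv
    exact ⟨z, hP _ _ hzv, hw⟩
  have partner : ∀ n, P v n → ∃ z, P v z ∧ z ≠ n ∧ C n z := fun n hn => by
    obtain ⟨z, hw, -, hzv, hzn⟩ := (hbridge n hn).exists_last_step (by rintro rfl; exact hvv hn)
    exact ⟨z, hP _ _ hzv, fun h => hzn (Or.inr ⟨h, rfl⟩),
      ReflTransGen.mono (fun x y h => ⟨h.1.1, h.2⟩) _ _ hw⟩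
  have nbrs : ∀ n m, P v n → P v m → C n m := fun n m hn hm => by
    by_cases hnm : n = m
    · exact hnm ▸ .refl
    obtain ⟨z, hz, hzn, hCz⟩ := partner n hn
    obtain ⟨w, hw, hwm, hCw⟩ := partner m hm
    by_cases hzm : z = m
    · exact hzm ▸ hCz
    by_cases hwn : w = n
    · exact hC (hwn ▸ hCw)
    have : z = w := by
      have := hnbr n hn; have := hnbr m hm; have := hnbr z hz; have := hnbr w hw
      grind
    exact hCz.trans (hC (this ▸ hCw))
  obtain ⟨za, hza, hCa⟩ := to_nbr a ha hav
  obtain ⟨zb, hzb, hCb⟩ := to_nbr b hb hbv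
  exact hCa.trans ((nbrs za zb hza hzb).trans (hC hCb))

theorem ReflTransGen.of_map {β : Type*} {f : β → α} (hf : Function.Injective f)
    (hP : ∀ x c, P (f x) c → ∃ y, f y = c) {a b : β} (h : ReflTransGen P (f a) (f b)) :
    ReflTransGen (fun x y => P (f x) (f y)) a b := by
  suffices ∀ c, ReflTransGen P (f a) c →
      ∃ y, f y = c ∧ ReflTransGen (fun x y => P (f x) (f y)) a y by
    obtain ⟨y, hy, hwalk⟩ := this _ h
    exact hf hy ▸ hwalk
  intro c hc
  induction hc with
  | refl => exact ⟨a, rfl, .refl⟩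
  | tail _ hcd ih =>
    obtain ⟨y, rfl, hwalk⟩ := ih
    obtain ⟨z, rfl⟩ := hP _ _ hcd
    exact ⟨z, rfl, hwalk.tail hcd⟩

theorem wellFounded_of_acyclic [Finite α] (h : ∀ v, ¬ TransGen P v v) : WellFounded P :=
  have : IsTrans α (TransGen P) := ⟨fun _ _ _ => TransGen.trans⟩
  have : Std.Irrefl (TransGen P) := ⟨h⟩
  Subrelation.wf TransGen.single (Finite.wellFounded_of_trans_of_irrefl (TransGen P))

theorem wellFounded_flip_of_acyclic [Finite α] (h : ∀ v, ¬ TransGen P v v) :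
    WellFounded (flip P) :=
  wellFounded_of_acyclic fun v hv => h v (transGen_swap.1 hv)

end Relation

namespace Phylo

open Relation

section Lists

variable {α : Type*} {P : α → α → Prop}

theorem reflTransGen_of_mem_isChain_cons {a x : α} {l : List α} (h : (a :: l).IsChain P)
    (hx : x ∈ a :: l) : ReflTransGen P a x :=
  h.induction (ReflTransGen P a) _ (fun _ _ hxy hx => hx.tail hxy) (fun _ => .refl) x hx

theorem reflTransGen_of_mem_isChain_getLast {b x : α} {l : List α} (h : l.IsChain P)
    (hb : l.getLast? = some b) (hx : x ∈ l) : ReflTransGen P x b := by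
  obtain ⟨l, rfl⟩ := List.getLast?_eq_some_iff.1 hb
  exact h.backwards_induction (ReflTransGen P · b) _ (fun _ _ hxy hy => hy.head hxy)
    (fun _ => by rw [List.getLast_concat]) x hx

theorem Adjac.mem_dropLast_tail {l : List α} {a b : α} (h : Adjac l a b) :
    a ∈ l.dropLast ∧ b ∈ l.tail := by
  obtain ⟨l₁, l₂, rfl⟩ := h
  constructor
  · simp
  · cases l₁ <;> simp

theorem Adjac.cons {l : List α} {a b : α} (h : Adjac l a b) (c : α) : Adjac (c :: l) a b := by
  obtain ⟨l₁, l₂, rfl⟩ := h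
  exact ⟨c :: l₁, l₂, rfl⟩

theorem Adjac.exists_eq_cons_of_nodup {a y : α} {t : List α} (h : Adjac (a :: t) a y)
    (hnd : (a :: t).Nodup) : ∃ t', t = y :: t' := by
  obtain ⟨_ | ⟨c, l₁⟩, l₂, heq⟩ := h
  · exact ⟨l₂, (List.cons.inj heq).2⟩
  · obtain ⟨rfl, rfl⟩ := List.cons.inj heq
    simp at hnd

theorem Adjac.exists_eq_concat_of_nodup {x y : α} {m : List α} (h : Adjac (m ++ [y]) x y)
    (hnd : (m ++ [y]).Nodup) : ∃ m', m = m' ++ [x] := by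
  obtain ⟨l₁, l₂, heq⟩ := h
  rcases l₂.eq_nil_or_concat with rfl | ⟨l', c, rfl⟩
  · exact ⟨l₁, List.append_inj_left' (by simpa using heq) rfl⟩
  · rw [List.concat_eq_append, show l₁ ++ x :: y :: (l' ++ [c]) = (l₁ ++ x :: y :: l') ++ [c] by
      simp] at heq
    obtain ⟨rfl, -⟩ := List.append_inj' heq rfl
    simp [List.nodup_append] at hnd

theorem Adjac.eq_of_pair {a b x y : α} (h : Adjac [a, b] x y) : x = a ∧ y = b := by
  obtain ⟨_ | ⟨c, _ | ⟨d, l₁⟩⟩, l₂, heq⟩ := h <;> simp_all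

end Lists

section Networks

variable {V : Type*} {R : V → V → Prop}

def adjWithout (R : V → V → Prop) (u v p q : V) : Prop :=
  (R p q ∨ R q p) ∧ ¬(p = u ∧ q = v ∨ p = v ∧ q = u)

theorem adjWithout_symm {u v p q : V} (h : adjWithout R u v p q) : adjWithout R u v q p :=
  ⟨h.1.symm, fun h' => h.2 (by tauto)⟩

theorem exists_eq_of_ncard_eq_one {Q : V → Prop} (h : {y | Q y}.ncard = 1) :
    ∃ a, Q a ∧ ∀ y, Q y → y = a := by
  obtain ⟨a, ha⟩ := Set.ncard_eq_one.1 h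
  exact ⟨a, (Set.ext_iff.1 ha a).2 rfl, fun y hy => (Set.ext_iff.1 ha y).1 hy⟩

theorem exists_eq_of_ncard_eq_two {Q : V → Prop} (h : {y | Q y}.ncard = 2) :
    ∃ a b, a ≠ b ∧ Q a ∧ Q b ∧ ∀ y, Q y → y = a ∨ y = b := by
  obtain ⟨a, b, hab, hs⟩ := Set.ncard_eq_two.1 h
  exact ⟨a, b, hab, (Set.ext_iff.1 hs a).2 (by simp), (Set.ext_iff.1 hs b).2 (by simp),
    fun y hy => by simpa using (Set.ext_iff.1 hs y).1 hy⟩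

namespace IsPhyloNet

theorem ne_of_rel (hR : IsPhyloNet R) {a b : V} (h : R a b) : a ≠ b := by
  rintro rfl
  exact hR.1 a (.single h)

theorem not_rel_of_rel (hR : IsPhyloNet R) {a b : V} (h : R a b) : ¬ R b a := fun h' =>
  hR.1 a (.head h (.single h'))

theorem inDeg_eq_one_of_isLf (hR : IsPhyloNet R) {v : V} (h : IsLf R v) : inDeg R v = 1 := by
  unfold IsLf at h
  rcases hR.2.2 v with h' | h' | h' | h' <;> omega

theorem exists_unique_parent_of_isLf (hR : IsPhyloNet R) {v : V} (h : IsLf R v) :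
    ∃ p, R p v ∧ ∀ y, R y v → y = p :=
  exists_eq_of_ncard_eq_one (hR.inDeg_eq_one_of_isLf h)

theorem outDeg_eq_two_of_inDeg_eq_zero (hR : IsPhyloNet R) {v : V} (h : inDeg R v = 0) :
    outDeg R v = 2 := by
  rcases hR.2.2 v with h' | h' | h' | h' <;> omega

end IsPhyloNet

variable [Finite V]

theorem IsLf.not_rel {u : V} (h : IsLf R u) (y : V) : ¬ R u y := fun hy =>
  ((Set.ncard_eq_zero (Set.toFinite _)).1 h).subset hy

theorem not_isLf_of_rel {u y : V} (h : R u y) : ¬ IsLf R u := fun hu => hu.not_rel y h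

theorem exists_rel_of_not_isLf {v : V} (h : ¬ IsLf R v) : ∃ c, R v c := by
  by_contra! hc
  exact h ((Set.ncard_eq_zero (Set.toFinite _)).2 (Set.eq_empty_of_forall_notMem hc))

theorem not_rel_of_inDeg_eq_zero {v : V} (h : inDeg R v = 0) (y : V) : ¬ R y v := fun hy =>
  ((Set.ncard_eq_zero (Set.toFinite _)).1 h).subset hy

theorem exists_rel_of_inDeg_ne_zero {v : V} (h : inDeg R v ≠ 0) : ∃ p, R p v := by
  by_contra! hp
  exact h ((Set.ncard_eq_zero (Set.toFinite _)).2 (Set.eq_empty_of_forall_notMem hp))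

namespace IsPhyloNet

theorem wellFounded_s6 (hR : IsPhyloNet R) : WellFounded R := wellFounded_of_acyclic hR.1

theorem wellFounded_flip (hR : IsPhyloNet R) : WellFounded (flip R) :=
  wellFounded_flip_of_acyclic hR.1

theorem reflTransGen_of_inDeg_eq_zero (hR : IsPhyloNet R) {r : V} (hr : inDeg R r = 0) (v : V) :
    ReflTransGen R r v := by
  induction v using hR.wellFounded_s6.induction with
  | _ v ih =>
    by_cases hv : inDeg R v = 0
    · obtain ⟨r', -, hr'⟩ := hR.2.1
      exact hr' v hv ▸ hr' r hr ▸ .refl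
    · obtain ⟨p, hp⟩ := exists_rel_of_inDeg_ne_zero hv
      exact (ih p hp).tail hp

theorem exists_three_neighbors (hR : IsPhyloNet R) (v : V) :
    ∃ n₁ n₂ n₃, ∀ y, R v y ∨ R y v → y = n₁ ∨ y = n₂ ∨ y = n₃ := by
  rcases hR.2.2 v with ⟨hin, hout⟩ | ⟨hin, hout⟩ | ⟨hin, hout⟩ | ⟨hin, hout⟩
  · obtain ⟨a, b, -, -, -, hab⟩ := exists_eq_of_ncard_eq_two hout
    refine ⟨a, b, b, fun y hy => ?_⟩
    rcases hy with hy | hy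
    · rcases hab y hy with h | h <;> simp [h]
    · exact absurd hy (not_rel_of_inDeg_eq_zero hin y)
  · obtain ⟨p, -, hp⟩ := exists_eq_of_ncard_eq_one hin
    obtain ⟨a, b, -, -, -, hab⟩ := exists_eq_of_ncard_eq_two hout
    exact ⟨p, a, b, fun y hy => hy.elim (fun hy => .inr (hab y hy)) (fun hy => .inl (hp y hy))⟩
  · obtain ⟨p, q, -, -, -, hpq⟩ := exists_eq_of_ncard_eq_two hin
    obtain ⟨c, -, hc⟩ := exists_eq_of_ncard_eq_one hout
    refine ⟨c, p, q, fun y hy => hy.elim (fun hy => .inl (hc y hy)) (fun hy => .inr (hpq y hy))⟩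
  · obtain ⟨p, -, hp⟩ := exists_eq_of_ncard_eq_one hin
    refine ⟨p, p, p, fun y hy => .inl (hy.elim (fun hy => ?_) (hp y))⟩
    exact absurd hy (IsLf.not_rel hout y)

theorem exists_isLf (hR : IsPhyloNet R) : ∃ ℓ, IsLf R ℓ := by
  obtain ⟨r, -, -⟩ := hR.2.1
  obtain ⟨ℓ, -, hℓ⟩ := hR.wellFounded_flip.has_min Set.univ ⟨r, trivial⟩
  exact ⟨ℓ, (Set.ncard_eq_zero (Set.toFinite _)).2
    (Set.eq_empty_of_forall_notMem fun y hy => hℓ y trivial hy)⟩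

end IsPhyloNet

end Networks

section Generators

variable {G : MultiDigraph} {k : ℕ}

theorem IsGenerator.src_ne_tgt (hG : IsGenerator k G) (e : G.E) : G.src e ≠ G.tgt e := fun h =>
  hG.2.2.1 _ (.single ⟨e, rfl, h.symm⟩)

theorem IsGenerator.two_le_mOutDeg {e₁ e₂ : G.E} (hG : IsGenerator k G) (hne : e₁ ≠ e₂)
    (h : G.src e₁ = G.src e₂) : 2 ≤ mOutDeg G (G.src e₁) := by
  have := hG.2.1
  rw [← Set.ncard_pair hne]
  exact Set.ncard_le_ncard (by rintro e (rfl | rfl) <;> simp [h]) (Set.toFinite _)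

theorem IsGenerator.mInDeg_le_one {e₁ e₂ : G.E} (hG : IsGenerator k G) (hne : e₁ ≠ e₂)
    (h : G.src e₁ = G.src e₂) : mInDeg G (G.src e₁) ≤ 1 := by
  have := hG.two_le_mOutDeg hne h
  rcases hG.2.2.2.2.2.2.2 (G.src e₁) with h' | h' | h' <;> omega

theorem IsGenerator.exists_other_edge (hG : IsGenerator k G) (e₀ : G.E) :
    ∃ e₁, e₁ ≠ e₀ ∧ ∃ x, x ≠ G.tgt e₀ ∧
      (G.src e₁ = x ∧ G.tgt e₁ = G.tgt e₀ ∨ G.src e₁ = G.tgt e₀ ∧ G.tgt e₁ = x) := by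
  have := hG.2.1
  rcases hG.2.2.2.2.2.2.2 (G.tgt e₀) with ⟨hin, -⟩ | ⟨hin, -⟩ | ⟨-, hout⟩
  · exact absurd hin ((Set.ncard_pos (Set.toFinite {e | G.tgt e = G.tgt e₀})).2 ⟨e₀, rfl⟩).ne'
  · obtain ⟨a, b, hab, ha, hb, -⟩ := exists_eq_of_ncard_eq_two hin
    obtain ⟨e₁, he₁, hne⟩ : ∃ e₁, G.tgt e₁ = G.tgt e₀ ∧ e₁ ≠ e₀ := by
      by_cases h : a = e₀
      · exact ⟨b, hb, fun h' => hab (h.trans h'.symm)⟩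
      · exact ⟨a, ha, h⟩
    exact ⟨e₁, hne, _, he₁ ▸ hG.src_ne_tgt e₁, .inl ⟨rfl, he₁⟩⟩
  · obtain ⟨e₁, he₁⟩ := (Set.ncard_pos (Set.toFinite _)).1 (show 0 < mOutDeg G (G.tgt e₀) by omega)
    refine ⟨e₁, ?_, _, fun h => hG.src_ne_tgt e₁ (he₁.trans h.symm), .inr ⟨he₁, rfl⟩⟩
    rintro rfl
    exact hG.src_ne_tgt e₁ he₁

theorem IsGenerator.reflTransGen_src_tgt_without (hG : IsGenerator k G) (e₀ : G.E) :
    ReflTransGen (fun p q => ∃ e, e ≠ e₀ ∧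
      (G.src e = p ∧ G.tgt e = q ∨ G.src e = q ∧ G.tgt e = p)) (G.src e₀) (G.tgt e₀) := by
  obtain ⟨e₁, hne, x, hx, he₁⟩ := hG.exists_other_edge e₀
  have hwalk := hG.2.2.2.2.1 (G.tgt e₀) (G.src e₀) x (hG.src_ne_tgt e₀) hx
  refine (ReflTransGen.mono ?_ _ _ hwalk).tail ⟨e₁, hne, by tauto⟩
  rintro p q ⟨hp, hq, ⟨e, rfl, rfl⟩ | ⟨e, rfl, rfl⟩⟩
  · exact ⟨e, by rintro rfl; exact hq rfl, .inl ⟨rfl, rfl⟩⟩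
  · exact ⟨e, by rintro rfl; exact hp rfl, .inr ⟨rfl, rfl⟩⟩

end Generators

section SimpleNetworks

variable {V : Type*} {R : V → V → Prop} {G : MultiDigraph} {k : ℕ}

theorem isChain_adjWithout {u v : V} (hvu : ¬ R v u) {l : List V} (hl : l.IsChain R)
    (hu : ¬ Adjac l u v) : l.IsChain (adjWithout R u v) := by
  induction l with
  | nil => exact List.isChain_nil
  | cons x t ih =>
    cases t with
    | nil => exact List.isChain_singleton _
    | cons y t =>
      rw [List.isChain_cons_cons] at hl ⊢
      refine ⟨⟨.inl hl.1, ?_⟩, ih hl.2 fun h => hu (h.cons x)⟩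
      rintro (⟨rfl, rfl⟩ | ⟨rfl, rfl⟩)
      · exact hu ⟨[], t, rfl⟩
      · exact hvu hl.1

theorem reflTransGen_adjWithout_of_isChain {u v : V} (hvu : ¬ R v u) {a b : V} {l : List V}
    (hl : (a :: l).IsChain R) (hnd : (a :: l).Nodup) (hb : (a :: l).getLast? = some b) :
    ∀ x ∈ a :: l, ReflTransGen (adjWithout R u v) a x ∨ ReflTransGen (adjWithout R u v) x b := by
  induction l generalizing a with
  | nil =>
    intro x hx
    rw [List.mem_singleton] at hx
    exact .inl (hx ▸ .refl)
  | cons c t ih =>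
    rw [List.isChain_cons_cons] at hl
    rw [List.getLast?_cons_cons] at hb
    intro x hx
    rcases List.mem_cons.1 hx with rfl | hx
    · exact .inl .refl
    by_cases hac : a = u ∧ c = v
    · have hu : ¬ Adjac (c :: t) u v := fun h =>
        (List.nodup_cons.1 hnd).1 (hac.1 ▸ List.mem_of_mem_dropLast h.mem_dropLast_tail.1)
      exact .inr (reflTransGen_of_mem_isChain_getLast (isChain_adjWithout hvu hl.2 hu) hb hx)
    · refine (ih hl.2 (List.nodup_cons.1 hnd).2 hb x hx).imp_left fun h => .head ⟨.inl hl.1, ?_⟩ h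
      rintro (h | ⟨rfl, rfl⟩)
      · exact hac h
      · exact hvu hl.1

structure LeafHanging (G : MultiDigraph) (R : V → V → Prop) where
  φ : G.W → V
  ψ : G.E → List V
  φ_injective : Function.Injective φ
  isChain : ∀ e, (fullPath G φ ψ e).IsChain R
  nodup : ∀ e, (ψ e).Nodup
  disjoint : ∀ e e', e ≠ e' → ∀ x ∈ ψ e, x ∉ ψ e'
  ne_φ : ∀ e, ∀ x ∈ ψ e, ∀ w, x ≠ φ w
  leaf_child : ∀ e, ∀ x ∈ ψ e, ∃ ℓ, IsLf R ℓ ∧ R x ℓ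
  leaf_child_of_sink : ∀ w, mInDeg G w = 2 → mOutDeg G w = 0 → ∃ ℓ, IsLf R ℓ ∧ R (φ w) ℓ
  cover : ∀ v : V, (∃ w, v = φ w) ∨ (∃ e, v ∈ ψ e) ∨ IsLf R v
  arc : ∀ a b : V, R a b → (∃ e, Adjac (fullPath G φ ψ e) a b) ∨
      (IsLf R b ∧ ((∃ e, a ∈ ψ e) ∨ ∃ w, mInDeg G w = 2 ∧ mOutDeg G w = 0 ∧ a = φ w))

theorem simpleFrom_iff : SimpleFrom G R ↔ IsPhyloNet R ∧ Nonempty (LeafHanging G R) :=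
  ⟨fun ⟨hR, φ, ψ, h₁, h₂, h₃, h₄, h₅, h₆, h₇, h₈, h₉⟩ =>
    ⟨hR, ⟨φ, ψ, h₁, h₂, h₃, h₄, h₅, h₆, h₇, h₈, h₉⟩⟩,
   fun ⟨hR, ⟨H⟩⟩ => ⟨hR, H.φ, H.ψ, H.φ_injective, H.isChain, H.nodup, H.disjoint, H.ne_φ,
    H.leaf_child, H.leaf_child_of_sink, H.cover, H.arc⟩⟩

namespace LeafHanging

variable (H : LeafHanging G R)

theorem nodup_fullPath {e : G.E} (he : G.src e ≠ G.tgt e) : (fullPath G H.φ H.ψ e).Nodup := by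
  rw [fullPath, List.cons_append, List.nodup_cons, List.nodup_append]
  refine ⟨?_, H.nodup e, List.nodup_singleton _, fun x hx y hy => ?_⟩
  · simp only [List.mem_append, List.mem_singleton, not_or]
    exact ⟨fun h => H.ne_φ e _ h _ rfl, fun h => he (H.φ_injective h)⟩
  · rw [List.mem_singleton] at hy
    exact hy ▸ H.ne_φ e x hx _

theorem mem_of_adjac {e : G.E} {a b : V} (h : Adjac (fullPath G H.φ H.ψ e) a b) :
    (a = H.φ (G.src e) ∨ a ∈ H.ψ e) ∧ (b ∈ H.ψ e ∨ b = H.φ (G.tgt e)) := by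
  obtain ⟨ha, hb⟩ := h.mem_dropLast_tail
  rw [fullPath, List.dropLast_concat, List.mem_cons] at ha
  simp only [fullPath, List.cons_append, List.tail_cons, List.mem_append,
    List.mem_singleton] at hb
  exact ⟨ha, hb⟩

theorem ψ_eq_nil_of_adjac {e : G.E} {w : G.W} (he : G.src e ≠ G.tgt e)
    (h : Adjac (fullPath G H.φ H.ψ e) (H.φ (G.src e)) (H.φ w)) : H.ψ e = [] := by
  obtain ⟨t, ht⟩ := h.exists_eq_cons_of_nodup (H.nodup_fullPath he)
  cases hψ : H.ψ e with
  | nil => rfl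
  | cons c l =>
    simp only [hψ, List.append_eq, List.cons_append, List.cons.injEq] at ht
    exact absurd ht.1 (H.ne_φ e c (hψ ▸ List.mem_cons_self) w)

theorem inDeg_le_mInDeg (hG : IsGenerator k G) {w : G.W} (hw : ¬ IsLf R (H.φ w)) :
    inDeg R (H.φ w) ≤ mInDeg G w := by
  have := hG.2.1
  have hsub : {x | R x (H.φ w)} ⊆ (fun e => (H.φ (G.src e) :: H.ψ e).getLast
      (List.cons_ne_nil _ _)) '' {e | G.tgt e = w} := by
    intro x hx
    rcases H.arc x _ hx with ⟨e, he⟩ | ⟨hl, -⟩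
    · have htgt : G.tgt e = w := by
        rcases (H.mem_of_adjac he).2 with h | h
        · exact absurd rfl (H.ne_φ e _ h w)
        · exact (H.φ_injective h).symm
      subst htgt
      obtain ⟨m, hm⟩ := Adjac.exists_eq_concat_of_nodup he (H.nodup_fullPath (hG.src_ne_tgt e))
      exact ⟨e, rfl, by simp [hm]⟩
    · exact absurd hl hw
  calc inDeg R (H.φ w) ≤ _ := Set.ncard_le_ncard hsub (Set.toFinite _)
    _ ≤ mInDeg G w := Set.ncard_image_le (Set.toFinite _)

theorem outDeg_le_one_of_parallel (hG : IsGenerator k G) {e₁ e₂ : G.E} (hne : e₁ ≠ e₂)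
    (hsrc : G.src e₁ = G.src e₂) (htgt : G.tgt e₁ = G.tgt e₂) (h₁ : H.ψ e₁ = [])
    (h₂ : H.ψ e₂ = []) : outDeg R (H.φ (G.src e₁)) ≤ 1 := by
  have := hG.2.1
  have hout : {e | G.src e = G.src e₁} = {e₁, e₂} := by
    refine (Set.eq_of_subset_of_ncard_le (by rintro e (rfl | rfl) <;> simp [hsrc]) ?_
      (Set.toFinite _)).symm
    rw [Set.ncard_pair hne]
    change mOutDeg G (G.src e₁) ≤ 2
    rcases hG.2.2.2.2.2.2.2 (G.src e₁) with h | h | h <;> omega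
  have hchild : ∀ y, R (H.φ (G.src e₁)) y → y = H.φ (G.tgt e₁) := by
    intro y hy
    rcases H.arc _ _ hy with ⟨e, he⟩ | ⟨-, ⟨e, hu⟩ | ⟨w, -, hw, hu⟩⟩
    · have hs : e ∈ {e | G.src e = G.src e₁} := by
        rcases (H.mem_of_adjac he).1 with h | h
        · exact H.φ_injective h.symm
        · exact absurd rfl (H.ne_φ e _ h _)
      have hpath : fullPath G H.φ H.ψ e = [H.φ (G.src e₁), H.φ (G.tgt e₁)] := by
        rw [hout] at hs
        rcases hs with rfl | rfl <;> simp [fullPath, *]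
      rw [hpath] at he
      exact he.eq_of_pair.2
    · exact absurd rfl (H.ne_φ e _ hu _)
    · have := hG.two_le_mOutDeg hne hsrc
      rw [H.φ_injective hu] at this
      omega
  calc outDeg R (H.φ (G.src e₁)) ≤ ({H.φ (G.tgt e₁)} : Set V).ncard :=
        Set.ncard_le_ncard hchild (Set.toFinite _)
    _ = 1 := Set.ncard_singleton _

/-- Two parallel edges subdivided by nothing would leave their common tail with a single
child but at most one parent. -/
theorem eq_of_adjac [Finite V] (hR : IsPhyloNet R) (hG : IsGenerator k G) {e₁ e₂ : G.E} {u v : V}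
    (huv : R u v) (h₁ : Adjac (fullPath G H.φ H.ψ e₁) u v)
    (h₂ : Adjac (fullPath G H.φ H.ψ e₂) u v) : e₁ = e₂ := by
  by_contra hne
  have key : ∀ x a b, (x = H.φ a ∨ x ∈ H.ψ e₁) → (x = H.φ b ∨ x ∈ H.ψ e₂) →
      x = H.φ a ∧ x = H.φ b := by
    rintro x a b (h | h) (h' | h')
    · exact ⟨h, h'⟩
    · exact absurd h (H.ne_φ e₂ x h' a)
    · exact absurd h' (H.ne_φ e₁ x h b)
    · exact absurd h' (H.disjoint e₁ e₂ hne x h)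
  have hu := key u _ _ (H.mem_of_adjac h₁).1 (H.mem_of_adjac h₂).1
  have hv := key v _ _ (H.mem_of_adjac h₁).2.symm (H.mem_of_adjac h₂).2.symm
  have hsrc := H.φ_injective (hu.1.symm.trans hu.2)
  have hψ : ∀ e, Adjac (fullPath G H.φ H.ψ e) u v → u = H.φ (G.src e) →
      v = H.φ (G.tgt e) → H.ψ e = [] := fun e h hue hve =>
    H.ψ_eq_nil_of_adjac (hG.src_ne_tgt e) (hue ▸ hve ▸ h)
  have hout := H.outDeg_le_one_of_parallel hG hne hsrc (H.φ_injective (hv.1.symm.trans hv.2))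
    (hψ e₁ h₁ hu.1 hv.1) (hψ e₂ h₂ hu.2 hv.2)
  have hin := (H.inDeg_le_mInDeg hG (hu.1 ▸ not_isLf_of_rel huv)).trans
    (hG.mInDeg_le_one hne hsrc)
  have hpos : 0 < outDeg R u := (Set.ncard_pos (Set.toFinite _)).2 ⟨v, huv⟩
  rw [← hu.1] at hout hin
  rcases hR.2.2 u with h | h | h | h <;> omega

/-- The generator stays connected without the one edge whose path carries `(u, v)`. -/
theorem reflTransGen_φ [Finite V] (H : LeafHanging G R) (hR : IsPhyloNet R)
    (hG : IsGenerator k G) {u v : V} (huv : R u v) (hv : ¬ IsLf R v) (w w' : G.W) :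
    ReflTransGen (adjWithout R u v) (H.φ w) (H.φ w') := by
  have hP : ∀ {x y}, ReflTransGen (adjWithout R u v) x y → ReflTransGen (adjWithout R u v) y x :=
    ReflTransGen.symm_of fun _ _ => adjWithout_symm
  obtain ⟨e₀, he₀⟩ := (H.arc u v huv).resolve_right fun h => hv h.1
  have hne : ∀ e, e ≠ e₀ → ReflTransGen (adjWithout R u v) (H.φ (G.src e)) (H.φ (G.tgt e)) :=
    fun e he => reflTransGen_of_mem_isChain_cons (isChain_adjWithout (hR.not_rel_of_rel huv)
      (H.isChain e) fun h => he (H.eq_of_adjac hR hG huv h he₀)) (by simp)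
  have hedge : ∀ e, ReflTransGen (adjWithout R u v) (H.φ (G.src e)) (H.φ (G.tgt e)) := by
    intro e
    by_cases he : e = e₀
    · subst he
      refine ReflTransGen.lift' H.φ ?_ _ _ (hG.reflTransGen_src_tgt_without e)
      rintro _ _ ⟨e', he', ⟨rfl, rfl⟩ | ⟨rfl, rfl⟩⟩
      exacts [hne e' he', hP (hne e' he')]
    · exact hne e he
  refine ReflTransGen.lift' H.φ ?_ _ _ (hG.2.2.2.1 w w')
  rintro _ _ (⟨e, rfl, rfl⟩ | ⟨e, rfl, rfl⟩)
  exacts [hedge e, hP (hedge e)]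

/-- The path carrying `(u, v)` falls apart into two pieces hanging on its ends. -/
theorem not_cutArc [Finite V] (H : LeafHanging G R) (hR : IsPhyloNet R) (hG : IsGenerator k G)
    {u v : V} (huv : R u v) (hv : ¬ IsLf R v) : ¬ CutArc R u v := by
  rintro ⟨-, a, b, hab⟩
  apply hab
  have hP : ∀ {x y}, ReflTransGen (adjWithout R u v) x y → ReflTransGen (adjWithout R u v) y x :=
    ReflTransGen.symm_of fun _ _ => adjWithout_symm
  obtain ⟨e₀, -⟩ := (H.arc u v huv).resolve_right fun h => hv h.1
  set w₀ := G.src e₀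
  have hpath : ∀ e, ∀ x ∈ fullPath G H.φ H.ψ e, ReflTransGen (adjWithout R u v) x (H.φ w₀) := by
    intro e x hx
    have hch := H.isChain e
    have hnd := H.nodup_fullPath (hG.src_ne_tgt e)
    rw [fullPath, List.cons_append] at hch hnd hx
    rcases reflTransGen_adjWithout_of_isChain (hR.not_rel_of_rel huv) (b := H.φ (G.tgt e)) hch
      hnd (by rw [← List.cons_append, List.getLast?_concat]) x hx with h | h
    exacts [(hP h).trans (H.reflTransGen_φ hR hG huv hv _ _),
      h.trans (H.reflTransGen_φ hR hG huv hv _ _)]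
  have hnonleaf : ∀ x, ¬ IsLf R x → ReflTransGen (adjWithout R u v) x (H.φ w₀) := by
    intro x hx
    rcases H.cover x with ⟨w, rfl⟩ | ⟨e, he⟩ | hl
    · exact H.reflTransGen_φ hR hG huv hv _ _
    · exact hpath e x (by simp [fullPath, he])
    · exact absurd hl hx
  have hall : ∀ x, ReflTransGen (adjWithout R u v) x (H.φ w₀) := by
    intro x
    by_cases hx : IsLf R x
    · obtain ⟨p, hp, -⟩ := hR.exists_unique_parent_of_isLf hx
      refine .head ⟨.inr hp, ?_⟩ (hnonleaf p (not_isLf_of_rel hp))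
      rintro (⟨rfl, -⟩ | ⟨rfl, -⟩)
      exacts [hx.not_rel _ huv, hv hx]
    · exact hnonleaf x hx
  exact (hall a).trans (hP (hall b))

end LeafHanging

theorem SimpleLevel.not_cutArc [Finite V] (h : SimpleLevel k R) {u v : V}
    (huv : R u v) (hv : ¬ IsLf R v) : ¬ CutArc R u v := by
  obtain ⟨G, hG, hsim⟩ := h
  obtain ⟨hR, ⟨H⟩⟩ := simpleFrom_iff.1 hsim
  exact H.not_cutArc hR hG huv hv

end SimpleNetworks

section TrivialCutArcs

variable {V : Type*} {R : V → V → Prop}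

def OnlyTrivialCutArcs (R : V → V → Prop) : Prop :=
  ∀ u v, CutArc R u v → IsLf R v

theorem cutArc_of_closed {p q : V} (hpq : R p q) {A : Set V} {a b : V} (ha : a ∈ A)
    (hb : b ∉ A) (hA : ∀ x ∈ A, ∀ y, adjWithout R p q x y → y ∈ A) : CutArc R p q :=
  ⟨hpq, a, b, fun h => hb (h.mem_of_closed hA ha)⟩

theorem OnlyTrivialCutArcs.reflTransGen (hc : OnlyTrivialCutArcs R) {p q : V}
    (hpq : R p q) (hq : ¬ IsLf R q) (a b : V) : ReflTransGen (adjWithout R p q) a b := by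
  by_contra h
  exact hq (hc p q ⟨hpq, a, b, h⟩)

variable [Finite V]

theorem exists_nonleaf_child (hR : IsPhyloNet R) (hc : OnlyTrivialCutArcs R) {v : V}
    (hin : inDeg R v = 1) (hv : ¬ IsLf R v) : ∃ c, R v c ∧ ¬ IsLf R c := by
  by_contra! hleaf
  obtain ⟨p, hp, hpu⟩ := exists_eq_of_ncard_eq_one hin
  refine hv (hc p v (cutArc_of_closed hp (A := {x | x = v ∨ R v x}) (.inl rfl)
    (fun h => h.elim (hR.ne_of_rel hp) (hR.not_rel_of_rel hp)) ?_))
  rintro x (rfl | hx) y ⟨hxy | hyx, hne⟩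
  · exact .inr hxy
  · exact absurd (.inr ⟨rfl, hpu y hyx⟩) hne
  · exact absurd hxy ((hleaf x hx).not_rel y)
  · obtain ⟨p', -, hp'⟩ := hR.exists_unique_parent_of_isLf (hleaf x hx)
    exact .inl ((hp' y hyx).trans (hp' v hx).symm)

theorem not_isLf_of_root_child (hR : IsPhyloNet R) (hc : OnlyTrivialCutArcs R)
    (hrec : ∃ w, inDeg R w = 2) {r c : V} (hr : inDeg R r = 0) (hrc : R r c) :
    ¬ IsLf R c := by
  intro hlc
  obtain ⟨c₁, c₂, hne, hc₁, hc₂, hall⟩ :=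
    exists_eq_of_ncard_eq_two (hR.outDeg_eq_two_of_inDeg_eq_zero hr)
  obtain ⟨c', hc'c, hc', hall'⟩ : ∃ c', c' ≠ c ∧ R r c' ∧ ∀ y, R r y → y = c ∨ y = c' := by
    rcases hall c hrc with rfl | rfl
    exacts [⟨c₂, hne.symm, hc₂, hall⟩, ⟨c₁, hne, hc₁, fun y hy => (hall y hy).symm⟩]
  by_cases hlc' : IsLf R c'
  · obtain ⟨w, hw⟩ := hrec
    have hwA : w ∈ ({r, c, c'} : Set V) := by
      refine (hR.reflTransGen_of_inDeg_eq_zero hr w).mem_of_closed ?_ (by simp)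
      rintro x (rfl | rfl | rfl) y hy
      · rcases hall' y hy with rfl | rfl <;> simp
      · exact absurd hy (hlc.not_rel y)
      · exact absurd hy (hlc'.not_rel y)
    rcases hwA with rfl | rfl | rfl
    · omega
    · have := hR.inDeg_eq_one_of_isLf hlc; omega
    · have := hR.inDeg_eq_one_of_isLf hlc'; omega
  · refine hlc' (hc r c' (cutArc_of_closed hc' (A := {r, c}) (a := r) (b := c')
      (by simp) ?_ ?_))
    · rintro (h | h)
      exacts [hR.ne_of_rel hc' h.symm, hc'c h]
    rintro x (rfl | rfl) y ⟨hxy | hyx, hne⟩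
    · rcases hall' y hxy with rfl | rfl
      exacts [by simp, absurd (.inl ⟨rfl, rfl⟩) hne]
    · exact absurd hyx (not_rel_of_inDeg_eq_zero hr y)
    · exact absurd hxy (hlc.not_rel y)
    · obtain ⟨p, -, hp⟩ := hR.exists_unique_parent_of_isLf hlc
      exact .inl ((hp y hyx).trans (hp r hrc).symm)

theorem IsPhyloNet.connOn_compl_netLeaves (hR : IsPhyloNet R) : ConnOn R (netLeaves R)ᶜ := by
  obtain ⟨r, -, hru⟩ := hR.2.1
  have to_root : ∀ v ∈ (netLeaves R)ᶜ, ReflTransGen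
      (fun p q => p ∈ (netLeaves R)ᶜ ∧ q ∈ (netLeaves R)ᶜ ∧ (R p q ∨ R q p)) v r := by
    intro v
    induction v using hR.wellFounded_s6.induction with
    | _ v ih =>
      intro hv
      by_cases h0 : inDeg R v = 0
      · exact hru v h0 ▸ .refl
      · obtain ⟨p, hp⟩ := exists_rel_of_inDeg_ne_zero h0
        exact .head ⟨hv, not_isLf_of_rel hp, .inr hp⟩ (ih p hp (not_isLf_of_rel hp))
  exact fun a ha b hb => (to_root a ha).trans
    (ReflTransGen.symm_of (fun _ _ h => ⟨h.2.1, h.1, h.2.2.symm⟩) (to_root b hb))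

theorem OnlyTrivialCutArcs.reflTransGen_compl_netLeaves (hR : IsPhyloNet R)
    (hc : OnlyTrivialCutArcs R) {p q : V} (hpq : R p q) (hq : ¬ IsLf R q) {a b : V}
    (ha : ¬ IsLf R a) (hb : ¬ IsLf R b) :
    ReflTransGen (fun x y => (x ∈ (netLeaves R)ᶜ ∧ y ∈ (netLeaves R)ᶜ ∧ (R x y ∨ R y x)) ∧
      ¬(x = p ∧ y = q ∨ x = q ∧ y = p)) a b := by
  have hleaf : ∀ x ∈ netLeaves R, ∃ n ∉ netLeaves R, ∀ y, adjWithout R p q x y → y = n := by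
    intro x hx
    obtain ⟨n, hn, hnu⟩ := hR.exists_unique_parent_of_isLf hx
    exact ⟨n, not_isLf_of_rel hn, fun y hy => hy.1.elim (fun h => absurd h (hx.not_rel y)) (hnu y)⟩
  exact ReflTransGen.mono (fun x y h => ⟨⟨h.2.1, h.2.2, h.1.1⟩, h.1.2⟩) _ _
    ((hc.reflTransGen hpq hq a b).avoid_pendant (fun _ _ => adjWithout_symm) hleaf ha hb)

theorem OnlyTrivialCutArcs.connOn_compl_netLeaves_diff (hR : IsPhyloNet R)
    (hc : OnlyTrivialCutArcs R) (v : V) : ConnOn R ((netLeaves R)ᶜ \ {v}) := by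
  intro a ha b hb
  by_cases hv : IsLf R v
  · refine ReflTransGen.mono ?_ _ _ (hR.connOn_compl_netLeaves a ha.1 b hb.1)
    exact fun x y h => ⟨⟨h.1, fun hx => h.1 (hx ▸ hv)⟩, ⟨h.2.1, fun hy => h.2.1 (hy ▸ hv)⟩, h.2.2⟩
  obtain ⟨n₁, n₂, n₃, hn⟩ := hR.exists_three_neighbors v
  refine ReflTransGen.mono (fun x y h => ⟨⟨h.1.1, h.2.1⟩, ⟨h.1.2.1, h.2.2⟩, h.1.2.2⟩) _ _
    (ReflTransGen.avoid_of_not_bridge (fun x y h => ⟨h.2.1, h.1, h.2.2.symm⟩)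
      hR.connOn_compl_netLeaves hv (fun h => h.2.2.elim (hR.ne_of_rel · rfl) (hR.ne_of_rel · rfl))
      (fun y hy => hn y hy.2.2) ?_ ha.1 hb.1 ha.2 hb.2)
  rintro n ⟨-, hn', hvn | hnv⟩
  · exact hc.reflTransGen_compl_netLeaves hR hvn hn' hn' hv
  · refine ReflTransGen.mono (fun x y h => ⟨h.1, fun h' => h.2 h'.symm⟩) _ _
      (hc.reflTransGen_compl_netLeaves hR hnv hv hn' hv)

theorem OnlyTrivialCutArcs.isBCC_compl_netLeaves (hR : IsPhyloNet R)
    (hc : OnlyTrivialCutArcs R) (hrec : ∃ w, inDeg R w = 2) : IsBCC R (netLeaves R)ᶜ := by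
  obtain ⟨r, hr, -⟩ := hR.2.1
  obtain ⟨c, -, -, hrc, -⟩ := exists_eq_of_ncard_eq_two (hR.outDeg_eq_two_of_inDeg_eq_zero hr)
  have hcl := not_isLf_of_root_child hR hc hrec hr hrc
  refine ⟨⟨⟨r, not_isLf_of_rel hrc, c, hcl, hrc⟩, hR.connOn_compl_netLeaves,
    fun w _ => hc.connOn_compl_netLeaves_diff hR w⟩, fun S hS hsub => ?_⟩
  refine Set.Subset.antisymm (fun x hxS hxl => ?_) hsub
  obtain ⟨p, hp, hpu⟩ := hR.exists_unique_parent_of_isLf hxl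
  obtain ⟨b, hb, hbp⟩ : ∃ b ∈ (netLeaves R)ᶜ, b ≠ p := by
    by_cases hrp : r = p
    · exact ⟨c, hcl, fun h => hR.ne_of_rel hrc (hrp.trans h.symm)⟩
    · exact ⟨r, not_isLf_of_rel hrc, hrp⟩
  have hxp : x ≠ p := fun h => hR.ne_of_rel hp h.symm
  have hbx : b ∈ ({x} : Set V) := by
    refine (hS.2.2 p (hsub (not_isLf_of_rel hp)) x ⟨hxS, hxp⟩ b ⟨hsub hb, hbp⟩).mem_of_closed
      ?_ rfl
    rintro z rfl y ⟨-, hy, hzy | hyz⟩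
    · exact absurd hzy (hxl.not_rel y)
    · exact absurd (hpu y hyz) hy.2
  exact hb (hbx ▸ hxl)

theorem exists_inDeg_eq_two_of_not_levelK {k : ℕ} (h : ¬ LevelK (k - 1) R) :
    ∃ v, inDeg R v = 2 := by
  obtain ⟨S, -, hS⟩ : ∃ S, IsBCC R S ∧ k - 1 < {v ∈ S | inDeg R v = 2}.ncard := by
    simpa [LevelK] using h
  obtain ⟨v, -, hv⟩ := (Set.ncard_pos (Set.toFinite _)).1 (lt_of_le_of_lt (Nat.zero_le _) hS)
  exact ⟨v, hv⟩

theorem ncard_inDeg_eq_two {k : ℕ} (hR : IsPhyloNet R) (hc : OnlyTrivialCutArcs R)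
    (hlev : LevelK k R) (hstrict : ¬ LevelK (k - 1) R) : {v | inDeg R v = 2}.ncard = k := by
  obtain ⟨S, -, hS⟩ : ∃ S, IsBCC R S ∧ k - 1 < {v ∈ S | inDeg R v = 2}.ncard := by
    simpa [LevelK] using hstrict
  have hle : {v ∈ S | inDeg R v = 2}.ncard ≤ {v | inDeg R v = 2}.ncard :=
    Set.ncard_le_ncard fun v hv => hv.2
  have hsame : {v ∈ (netLeaves R)ᶜ | inDeg R v = 2} = {v | inDeg R v = 2} := by
    ext v
    simp only [Set.mem_ofPred_eq, Set.mem_compl_iff, netLeaves, IsLf, and_iff_right_iff_imp]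
    intro hv
    rcases hR.2.2 v with h | h | h | h <;> omega
  have := hlev _ (hc.isBCC_compl_netLeaves hR (exists_inDeg_eq_two_of_not_levelK hstrict))
  rw [hsame] at this
  omega

end TrivialCutArcs

section SubdivisionChains

variable {V : Type*} {R : V → V → Prop}

/-- The vertices not created by subdividing an edge of the generator. -/
def genVerts (R : V → V → Prop) : Set V :=
  {v | inDeg R v = 0 ∨ inDeg R v = 2 ∨ (outDeg R v = 2 ∧ ∀ c, R v c → ¬ IsLf R c)}

/-- Each generator edge is recorded by its first arc. -/
def genArcs (R : V → V → Prop) : Set (V × V) :=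
  {p | R p.1 p.2 ∧ p.1 ∈ genVerts R ∧ ¬ IsLf R p.2}

def IsSubdiv (R : V → V → Prop) (v : V) : Prop := v ∉ genVerts R ∧ ¬ IsLf R v

theorem not_isLf_of_mem_genVerts (hR : IsPhyloNet R) {v : V} (hv : v ∈ genVerts R) :
    ¬ IsLf R v := by
  unfold IsLf
  rcases hv with h | h | h <;> rcases hR.2.2 v with h' | h' | h' | h' <;> omega

theorem IsSubdiv.inDeg_eq_one (hR : IsPhyloNet R) {v : V} (hv : IsSubdiv R v) :
    inDeg R v = 1 := by
  obtain ⟨hW, hl⟩ := hv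
  simp only [genVerts, Set.mem_ofPred_eq, not_or] at hW
  unfold IsLf at hl
  rcases hR.2.2 v with h | h | h | h <;> omega

theorem IsSubdiv.eq_of_rel_left (hR : IsPhyloNet R) {v p₁ p₂ : V} (hv : IsSubdiv R v)
    (h₁ : R p₁ v) (h₂ : R p₂ v) : p₁ = p₂ := by
  obtain ⟨p, -, hp⟩ := exists_eq_of_ncard_eq_one (hv.inDeg_eq_one hR)
  exact (hp p₁ h₁).trans (hp p₂ h₂).symm

open Classical in
/-- The subdivision vertices met when walking down from `b` along non-leaf children, until a
generator vertex is reached. -/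
noncomputable def subdivChain (R : V → V → Prop) (b : V) : List V :=
  if hwf : WellFounded (flip R) then
    hwf.fix (fun v rec => if h : v ∉ genVerts R ∧ ∃ c, R v c ∧ ¬ IsLf R c then
      v :: rec h.2.choose h.2.choose_spec.1 else []) b
  else []

open Classical in
/-- The generator vertex at which that walk stops. -/
noncomputable def chainTarget (R : V → V → Prop) (b : V) : V :=
  if hwf : WellFounded (flip R) then
    hwf.fix (fun v rec => if h : v ∉ genVerts R ∧ ∃ c, R v c ∧ ¬ IsLf R c then
      rec h.2.choose h.2.choose_spec.1 else v) b
  else b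

open Classical in
/-- The generator arc whose subdivision chain contains `x`. -/
noncomputable def firstArc (R : V → V → Prop) (x : V) : V × V :=
  if hwf : WellFounded R then
    hwf.fix (fun v rec => if h : ∃ p, R p v then
      (if h.choose ∈ genVerts R then (h.choose, v) else rec h.choose h.choose_spec) else (v, v)) x
  else (x, x)

def genAdj (R : V → V → Prop) (a b : V) : Prop := ∃ c, (a, c) ∈ genArcs R ∧ chainTarget R c = b

open Classical in
/-- A generator vertex standing in for `x` in walks that avoid `v`. -/
noncomputable def proj (R : V → V → Prop) (v x : V) : V :=
  if x ∈ genVerts R then x else if (firstArc R x).1 ≠ v then (firstArc R x).1 else chainTarget R x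

theorem proj_of_mem {v x : V} (hx : x ∈ genVerts R) : proj R v x = x := if_pos hx

variable [Finite V]

theorem IsSubdiv.exists_children (hR : IsPhyloNet R) (hc : OnlyTrivialCutArcs R) {v : V}
    (hv : IsSubdiv R v) :
    ∃ ℓ c, IsLf R ℓ ∧ R v ℓ ∧ ¬ IsLf R c ∧ R v c ∧ ∀ y, R v y → y = ℓ ∨ y = c := by
  have hin := hv.inDeg_eq_one hR
  obtain ⟨hW, hl⟩ := hv
  simp only [genVerts, Set.mem_ofPred_eq, not_or, not_and, not_forall, not_not] at hW
  have hout : outDeg R v = 2 := by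
    unfold IsLf at hl
    rcases hR.2.2 v with h | h | h | h <;> omega
  obtain ⟨ℓ, hvℓ, hℓ⟩ := hW.2.2 hout
  obtain ⟨c, hvc, hcl⟩ := exists_nonleaf_child hR hc hin hl
  obtain ⟨a, b, -, -, -, hab⟩ := exists_eq_of_ncard_eq_two hout
  refine ⟨ℓ, c, hℓ, hvℓ, hcl, hvc, fun y hy => ?_⟩
  have hℓc : ℓ ≠ c := fun h => hcl (h ▸ hℓ)
  rcases hab y hy with rfl | rfl <;> rcases hab ℓ hvℓ with h₁ | h₁ <;>
    rcases hab c hvc with h₂ | h₂ <;> simp_all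

theorem IsSubdiv.eq_of_rel (hR : IsPhyloNet R) (hc : OnlyTrivialCutArcs R) {v c₁ c₂ : V}
    (hv : IsSubdiv R v) (h₁ : R v c₁) (h₁' : ¬ IsLf R c₁) (h₂ : R v c₂) (h₂' : ¬ IsLf R c₂) :
    c₁ = c₂ := by
  obtain ⟨ℓ, c, hℓ, -, -, -, hall⟩ := hv.exists_children hR hc
  rcases hall c₁ h₁ with rfl | rfl
  · exact absurd hℓ h₁'
  rcases hall c₂ h₂ with rfl | rfl
  exacts [absurd hℓ h₂', rfl]

theorem isSubdiv_of_rel {p c : V} (hpc : R p c) (hp : p ∉ genVerts R) : IsSubdiv R p :=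
  ⟨hp, not_isLf_of_rel hpc⟩

theorem isSubdiv_induction (hR : IsPhyloNet R) (hc : OnlyTrivialCutArcs R) {P : V → Prop}
    (base : ∀ b, ¬ IsSubdiv R b → P b)
    (step : ∀ b c, IsSubdiv R b → R b c → ¬ IsLf R c → P c → P b) (b : V) : P b := by
  induction b using hR.wellFounded_flip.induction with
  | _ b ih =>
    by_cases hb : IsSubdiv R b
    · obtain ⟨-, c, -, -, hcl, hbc, -⟩ := hb.exists_children hR hc
      exact step b c hb hbc hcl (ih c hbc)
    · exact base b hb

theorem subdivChain_of_not_isSubdiv (hR : IsPhyloNet R) {b : V} (hb : ¬ IsSubdiv R b) :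
    subdivChain R b = [] := by
  rw [subdivChain, dif_pos hR.wellFounded_flip, WellFounded.fix_eq, dif_neg]
  rintro ⟨hW, c, hbc, -⟩
  exact hb (isSubdiv_of_rel hbc hW)

theorem chainTarget_of_not_isSubdiv (hR : IsPhyloNet R) {b : V} (hb : ¬ IsSubdiv R b) :
    chainTarget R b = b := by
  rw [chainTarget, dif_pos hR.wellFounded_flip, WellFounded.fix_eq, dif_neg]
  rintro ⟨hW, c, hbc, -⟩
  exact hb (isSubdiv_of_rel hbc hW)

theorem subdivChain_of_isSubdiv (hR : IsPhyloNet R) (hc : OnlyTrivialCutArcs R) {b c : V}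
    (hb : IsSubdiv R b) (hbc : R b c) (hcl : ¬ IsLf R c) :
    subdivChain R b = b :: subdivChain R c := by
  have h : b ∉ genVerts R ∧ ∃ c, R b c ∧ ¬ IsLf R c := ⟨hb.1, c, hbc, hcl⟩
  have key : subdivChain R b = b :: subdivChain R h.2.choose := by
    simp only [subdivChain, dif_pos hR.wellFounded_flip]
    rw [WellFounded.fix_eq, dif_pos h]
  rw [key, hb.eq_of_rel hR hc h.2.choose_spec.1 h.2.choose_spec.2 hbc hcl]

theorem chainTarget_of_isSubdiv (hR : IsPhyloNet R) (hc : OnlyTrivialCutArcs R) {b c : V}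
    (hb : IsSubdiv R b) (hbc : R b c) (hcl : ¬ IsLf R c) :
    chainTarget R b = chainTarget R c := by
  have h : b ∉ genVerts R ∧ ∃ c, R b c ∧ ¬ IsLf R c := ⟨hb.1, c, hbc, hcl⟩
  have key : chainTarget R b = chainTarget R h.2.choose := by
    simp only [chainTarget, dif_pos hR.wellFounded_flip]
    rw [WellFounded.fix_eq, dif_pos h]
  rw [key, hb.eq_of_rel hR hc h.2.choose_spec.1 h.2.choose_spec.2 hbc hcl]

theorem chainTarget_mem_genVerts (hR : IsPhyloNet R) (hc : OnlyTrivialCutArcs R) {b : V}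
    (hb : ¬ IsLf R b) : chainTarget R b ∈ genVerts R ∧ ReflTransGen R b (chainTarget R b) := by
  induction b using isSubdiv_induction hR hc with
  | base b hs =>
    rw [chainTarget_of_not_isSubdiv hR hs]
    exact ⟨by_contra fun h => hs ⟨h, hb⟩, .refl⟩
  | step b c hs hbc hcl ih =>
    rw [chainTarget_of_isSubdiv hR hc hs hbc hcl]
    exact ⟨(ih hcl).1, .head hbc (ih hcl).2⟩

theorem mem_subdivChain (hR : IsPhyloNet R) (hc : OnlyTrivialCutArcs R) {b x : V}
    (hx : x ∈ subdivChain R b) :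
    IsSubdiv R x ∧ chainTarget R x = chainTarget R b ∧ ReflTransGen R b x := by
  induction b using isSubdiv_induction hR hc with
  | base b hs => simp [subdivChain_of_not_isSubdiv hR hs] at hx
  | step b c hs hbc hcl ih =>
    rw [subdivChain_of_isSubdiv hR hc hs hbc hcl, List.mem_cons] at hx
    rcases hx with rfl | hx
    · exact ⟨hs, rfl, .refl⟩
    · obtain ⟨h₁, h₂, h₃⟩ := ih hx
      exact ⟨h₁, h₂.trans (chainTarget_of_isSubdiv hR hc hs hbc hcl).symm, .head hbc h₃⟩

theorem subdivChain_nodup (hR : IsPhyloNet R) (hc : OnlyTrivialCutArcs R) (b : V) :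
    (subdivChain R b).Nodup := by
  induction b using isSubdiv_induction hR hc with
  | base b hs => simp [subdivChain_of_not_isSubdiv hR hs]
  | step b c hs hbc hcl ih =>
    rw [subdivChain_of_isSubdiv hR hc hs hbc hcl, List.nodup_cons]
    exact ⟨fun hb => hR.1 b (.head' hbc (mem_subdivChain hR hc hb).2.2), ih⟩

theorem subdivChain_append_chainTarget (hR : IsPhyloNet R) (hc : OnlyTrivialCutArcs R) {b : V}
    (hb : ¬ IsLf R b) :
    ∃ t, subdivChain R b ++ [chainTarget R b] = b :: t ∧ (b :: t).IsChain R := by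
  induction b using isSubdiv_induction hR hc with
  | base b hs =>
    rw [subdivChain_of_not_isSubdiv hR hs, chainTarget_of_not_isSubdiv hR hs]
    exact ⟨[], rfl, List.isChain_singleton b⟩
  | step b c hs hbc hcl ih =>
    obtain ⟨t, ht, hch⟩ := ih hcl
    rw [subdivChain_of_isSubdiv hR hc hs hbc hcl, chainTarget_of_isSubdiv hR hc hs hbc hcl,
      List.cons_append, ht]
    exact ⟨c :: t, rfl, List.isChain_cons_cons.2 ⟨hbc, hch⟩⟩

theorem exists_subdivChain_eq_append (hR : IsPhyloNet R) (hc : OnlyTrivialCutArcs R) {b x : V}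
    (hx : x ∈ subdivChain R b) : ∃ l, subdivChain R b = l ++ subdivChain R x := by
  induction b using isSubdiv_induction hR hc with
  | base b hs => simp [subdivChain_of_not_isSubdiv hR hs] at hx
  | step b c hs hbc hcl ih =>
    have hb := subdivChain_of_isSubdiv hR hc hs hbc hcl
    rw [hb, List.mem_cons] at hx
    rcases hx with rfl | hx
    · exact ⟨[], rfl⟩
    · obtain ⟨l, hl⟩ := ih hx
      exact ⟨b :: l, by rw [hb, hl, List.cons_append]⟩

theorem mem_subdivChain_self (hR : IsPhyloNet R) (hc : OnlyTrivialCutArcs R) {x : V}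
    (hx : IsSubdiv R x) : x ∈ subdivChain R x := by
  obtain ⟨-, c, -, -, hcl, hxc, -⟩ := hx.exists_children hR hc
  simp [subdivChain_of_isSubdiv hR hc hx hxc hcl]

theorem firstArc_of_mem (hR : IsPhyloNet R) {x p : V} (hx : IsSubdiv R x) (hpx : R p x)
    (hp : p ∈ genVerts R) : firstArc R x = (p, x) := by
  have h : ∃ p, R p x := ⟨p, hpx⟩
  have hp' : h.choose = p := hx.eq_of_rel_left hR h.choose_spec hpx
  simp only [firstArc, dif_pos hR.wellFounded_s6]
  rw [WellFounded.fix_eq, dif_pos h, if_pos (hp' ▸ hp), hp']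

theorem firstArc_of_not_mem (hR : IsPhyloNet R) {x p : V} (hx : IsSubdiv R x) (hpx : R p x)
    (hp : p ∉ genVerts R) : firstArc R x = firstArc R p := by
  have h : ∃ p, R p x := ⟨p, hpx⟩
  have hp' : h.choose = p := hx.eq_of_rel_left hR h.choose_spec hpx
  simp only [firstArc, dif_pos hR.wellFounded_s6]
  rw [WellFounded.fix_eq, dif_pos h, if_neg (hp' ▸ hp)]
  beta_reduce
  rw [hp']

theorem firstArc_mem_genArcs (hR : IsPhyloNet R) (hc : OnlyTrivialCutArcs R) {x : V}
    (hx : IsSubdiv R x) : firstArc R x ∈ genArcs R ∧ x ∈ subdivChain R (firstArc R x).2 := by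
  induction x using hR.wellFounded_s6.induction with
  | _ x ih =>
    obtain ⟨p, hpx, -⟩ := exists_eq_of_ncard_eq_one (hx.inDeg_eq_one hR)
    by_cases hp : p ∈ genVerts R
    · rw [firstArc_of_mem hR hx hpx hp]
      exact ⟨⟨hpx, hp, hx.2⟩, mem_subdivChain_self hR hc hx⟩
    · rw [firstArc_of_not_mem hR hx hpx hp]
      have hps := isSubdiv_of_rel hpx hp
      obtain ⟨hmem, hpch⟩ := ih p hpx hps
      obtain ⟨l, hl⟩ := exists_subdivChain_eq_append hR hc hpch
      refine ⟨hmem, ?_⟩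
      rw [hl, subdivChain_of_isSubdiv hR hc hps hpx hx.2]
      simp [mem_subdivChain_self hR hc hx]

theorem isSubdiv_of_mem_subdivChain (hR : IsPhyloNet R) {b x : V}
    (hx : x ∈ subdivChain R b) : IsSubdiv R b :=
  by_contra fun h => by simp [subdivChain_of_not_isSubdiv hR h] at hx

theorem firstArc_eq_firstArc_of_mem (hR : IsPhyloNet R) (hc : OnlyTrivialCutArcs R) {b x : V}
    (hx : x ∈ subdivChain R b) : firstArc R x = firstArc R b := by
  induction b using isSubdiv_induction hR hc with
  | base b hs => exact absurd (isSubdiv_of_mem_subdivChain hR hx) hs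
  | step b c hs hbc hcl ih =>
    rw [subdivChain_of_isSubdiv hR hc hs hbc hcl, List.mem_cons] at hx
    rcases hx with rfl | hx
    · rfl
    · rw [ih hx, firstArc_of_not_mem hR (isSubdiv_of_mem_subdivChain hR hx) hbc hs.1]

theorem firstArc_eq_of_mem_subdivChain (hR : IsPhyloNet R) (hc : OnlyTrivialCutArcs R)
    {p : V × V} {x : V} (hp : p ∈ genArcs R) (hx : x ∈ subdivChain R p.2) : firstArc R x = p := by
  rw [firstArc_eq_firstArc_of_mem hR hc hx,
    firstArc_of_mem hR (isSubdiv_of_mem_subdivChain hR hx) hp.1 hp.2.1]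

theorem isChain_cons_subdivChain (hR : IsPhyloNet R) (hc : OnlyTrivialCutArcs R) {a b : V}
    (hab : R a b) (hb : ¬ IsLf R b) : (a :: subdivChain R b ++ [chainTarget R b]).IsChain R := by
  obtain ⟨t, ht, hch⟩ := subdivChain_append_chainTarget hR hc hb
  rw [List.cons_append, ht]
  exact List.isChain_cons_cons.2 ⟨hab, hch⟩

/-- The last vertex before the head of the generator edge leaving through the arc `p`. -/
noncomputable def lastBefore (R : V → V → Prop) (p : V × V) : V :=
  (p.1 :: subdivChain R p.2).getLast (List.cons_ne_nil _ _)

theorem lastBefore_of_not_isSubdiv (hR : IsPhyloNet R) {p : V × V} (h : ¬ IsSubdiv R p.2) :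
    lastBefore R p = p.1 := by
  simp [lastBefore, subdivChain_of_not_isSubdiv hR h]

theorem lastBefore_mem (hR : IsPhyloNet R) (hc : OnlyTrivialCutArcs R) {p : V × V}
    (h : IsSubdiv R p.2) : lastBefore R p ∈ subdivChain R p.2 := by
  obtain ⟨-, c, -, -, hcl, hbc, -⟩ := h.exists_children hR hc
  simp only [lastBefore, subdivChain_of_isSubdiv hR hc h hbc hcl, List.getLast_cons_cons]
  exact List.getLast_mem _

theorem rel_lastBefore (hR : IsPhyloNet R) (hc : OnlyTrivialCutArcs R) {p : V × V}
    (hp : p ∈ genArcs R) : R (lastBefore R p) (chainTarget R p.2) :=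
  (List.isChain_append.1 (isChain_cons_subdivChain hR hc hp.1 hp.2.2)).2.2 _
    (List.getLast?_eq_some_getLast _) _ rfl

theorem lastBefore_injOn (hR : IsPhyloNet R) (hc : OnlyTrivialCutArcs R) {p q : V × V}
    (hp : p ∈ genArcs R) (hq : q ∈ genArcs R) (ht : chainTarget R p.2 = chainTarget R q.2)
    (h : lastBefore R p = lastBefore R q) : p = q := by
  by_cases hps : IsSubdiv R p.2 <;> by_cases hqs : IsSubdiv R q.2
  · rw [← firstArc_eq_of_mem_subdivChain hR hc hp (lastBefore_mem hR hc hps), h,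
      firstArc_eq_of_mem_subdivChain hR hc hq (lastBefore_mem hR hc hqs)]
  · rw [lastBefore_of_not_isSubdiv hR hqs] at h
    exact absurd hq.2.1 (h ▸ mem_subdivChain hR hc (lastBefore_mem hR hc hps)).1.1
  · rw [lastBefore_of_not_isSubdiv hR hps] at h
    exact absurd hp.2.1 (h ▸ mem_subdivChain hR hc (lastBefore_mem hR hc hqs)).1.1
  · rw [lastBefore_of_not_isSubdiv hR hps, lastBefore_of_not_isSubdiv hR hqs] at h
    rw [chainTarget_of_not_isSubdiv hR hps, chainTarget_of_not_isSubdiv hR hqs] at ht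
    exact Prod.ext h ht

theorem exists_lastBefore_eq (hR : IsPhyloNet R) (hc : OnlyTrivialCutArcs R) {v x : V}
    (hv : v ∈ genVerts R) (hx : R x v) :
    ∃ p ∈ genArcs R, chainTarget R p.2 = v ∧ lastBefore R p = x := by
  have hvs : ¬ IsSubdiv R v := fun h => h.1 hv
  by_cases hxW : x ∈ genVerts R
  · exact ⟨(x, v), ⟨hx, hxW, not_isLf_of_mem_genVerts hR hv⟩,
      chainTarget_of_not_isSubdiv hR hvs, lastBefore_of_not_isSubdiv hR hvs⟩
  have hxs := isSubdiv_of_rel hx hxW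
  obtain ⟨hp, hxp⟩ := firstArc_mem_genArcs hR hc hxs
  obtain ⟨l, hl⟩ := exists_subdivChain_eq_append hR hc hxp
  refine ⟨firstArc R x, hp, ?_, ?_⟩
  · rw [← (mem_subdivChain hR hc hxp).2.1,
      chainTarget_of_isSubdiv hR hc hxs hx (not_isLf_of_mem_genVerts hR hv),
      chainTarget_of_not_isSubdiv hR hvs]
  · simp [lastBefore, hl, subdivChain_of_isSubdiv hR hc hxs hx (not_isLf_of_mem_genVerts hR hv),
      subdivChain_of_not_isSubdiv hR hvs]

/-- If both ends of the edge carrying `x` were `v`, following it would give a cycle. -/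
theorem proj_ne (hR : IsPhyloNet R) (hc : OnlyTrivialCutArcs R) {v x : V} (hx : ¬ IsLf R x)
    (hxv : x ≠ v) : proj R v x ≠ v := by
  unfold proj
  split_ifs with h₁ h₂
  · exact hxv
  · exact h₂
  · intro h
    rw [not_not] at h₂
    obtain ⟨hmem, hxch⟩ := firstArc_mem_genArcs hR hc ⟨h₁, hx⟩
    have hcyc : TransGen R (firstArc R x).1 (chainTarget R x) := .head' hmem.1
      ((mem_subdivChain hR hc hxch).2.2.trans (chainTarget_mem_genVerts hR hc hx).2)
    rw [h₂, h] at hcyc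
    exact hR.1 v hcyc

theorem proj_step (hR : IsPhyloNet R) (hc : OnlyTrivialCutArcs R) {v x y : V} (hxy : R x y)
    (hy : ¬ IsLf R y) (hxv : x ≠ v) :
    proj R v x = proj R v y ∨ genAdj R (proj R v x) (proj R v y) := by
  by_cases hxW : x ∈ genVerts R <;> by_cases hyW : y ∈ genVerts R
  · right
    simp only [proj, if_pos hxW, if_pos hyW]
    exact ⟨y, ⟨hxy, hxW, hy⟩, chainTarget_of_not_isSubdiv hR fun h => h.1 hyW⟩
  · left
    simp [proj, hxW, hyW, firstArc_of_mem hR ⟨hyW, hy⟩ hxy hxW, hxv]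
  · have hxs : IsSubdiv R x := isSubdiv_of_rel hxy hxW
    have hxt : chainTarget R x = y := by
      rw [chainTarget_of_isSubdiv hR hc hxs hxy hy, chainTarget_of_not_isSubdiv hR fun h => h.1 hyW]
    obtain ⟨hmem, hxch⟩ := firstArc_mem_genArcs hR hc hxs
    by_cases ht : (firstArc R x).1 = v
    · left
      simp [proj, hxW, hyW, ht, hxt]
    · right
      simp only [proj, if_neg hxW, if_pos hyW, if_pos ht]
      exact ⟨(firstArc R x).2, hmem, (mem_subdivChain hR hc hxch).2.1.symm.trans hxt⟩
  · left
    have hxs : IsSubdiv R x := isSubdiv_of_rel hxy hxW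
    rw [proj, proj, if_neg hxW, if_neg hyW, firstArc_of_not_mem hR ⟨hyW, hy⟩ hxy hxW,
      chainTarget_of_isSubdiv hR hc hxs hxy hy]

theorem reflTransGen_proj (hR : IsPhyloNet R) (hc : OnlyTrivialCutArcs R) (v : V) {a b : V}
    (h : ReflTransGen (fun p q => p ∈ (netLeaves R)ᶜ \ {v} ∧ q ∈ (netLeaves R)ᶜ \ {v} ∧
      (R p q ∨ R q p)) a b) :
    ReflTransGen (fun p q => p ≠ v ∧ q ≠ v ∧ (genAdj R p q ∨ genAdj R q p))
      (proj R v a) (proj R v b) := by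
  induction h with
  | refl => exact .refl
  | @tail b c _ hbc ih =>
    obtain ⟨⟨hb, hbv⟩, ⟨hc', hcv⟩, hbc | hcb⟩ := hbc
    · rcases proj_step hR hc hbc hc' hbv with h | h
      · exact h ▸ ih
      · exact ih.tail ⟨proj_ne hR hc hb hbv, proj_ne hR hc hc' hcv, .inl h⟩
    · rcases proj_step hR hc hcb hb hcv with h | h
      · exact h ▸ ih
      · exact ih.tail ⟨proj_ne hR hc hb hbv, proj_ne hR hc hc' hcv, .inr h⟩

end SubdivisionChains

section UnderlyingGenerator

variable {V : Type*} {R : V → V → Prop} [Finite V]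

noncomputable def genVertEquiv (R : V → V → Prop) : genVerts R ≃ Fin (Nat.card (genVerts R)) :=
  Finite.equivFin _

noncomputable def genArcEquiv (R : V → V → Prop) : genArcs R ≃ Fin (Nat.card (genArcs R)) :=
  Finite.equivFin _

open Classical in
/-- The generator underlying `R`: its vertices are `genVerts R`, and the edge leaving through
the arc `(a, b) ∈ genArcs R` ends at `chainTarget R b` (the junk value in the `else` branch
never occurs, see `generator.vertex_tgt`). Vertices and edges are numbered by `Fin` because a
`MultiDigraph` lives in `Type`. -/
noncomputable def generator (R : V → V → Prop) : MultiDigraph where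
  W := Fin (Nat.card (genVerts R))
  E := Fin (Nat.card (genArcs R))
  src e := genVertEquiv R ⟨((genArcEquiv R).symm e).1.1,
    ((genArcEquiv R).symm e).2.2.1⟩
  tgt e := if h : chainTarget R ((genArcEquiv R).symm e).1.2 ∈ genVerts R then
    genVertEquiv R ⟨_, h⟩ else genVertEquiv R ⟨((genArcEquiv R).symm e).1.1,
    ((genArcEquiv R).symm e).2.2.1⟩

namespace generator

variable (R) in
noncomputable def vertex (w : (generator R).W) : V := ((genVertEquiv R).symm w : V)

variable (R) in
noncomputable def arc (e : (generator R).E) : V × V :=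
  ((genArcEquiv R).symm e : V × V)

theorem vertex_injective : Function.Injective (vertex R) := fun _ _ h =>
  (genVertEquiv R).symm.injective (Subtype.ext h)

theorem vertex_mem (w : (generator R).W) : vertex R w ∈ genVerts R :=
  ((genVertEquiv R).symm w).2

theorem exists_vertex_eq {v : V} (hv : v ∈ genVerts R) : ∃ w, vertex R w = v :=
  ⟨genVertEquiv R ⟨v, hv⟩, congrArg Subtype.val ((genVertEquiv R).symm_apply_apply _)⟩

theorem arc_injective : Function.Injective (arc R) := fun _ _ h =>
  (genArcEquiv R).symm.injective (Subtype.ext h)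

theorem arc_mem (e : (generator R).E) : arc R e ∈ genArcs R :=
  ((genArcEquiv R).symm e).2

theorem exists_arc_eq {p : V × V} (hp : p ∈ genArcs R) : ∃ e, arc R e = p :=
  ⟨genArcEquiv R ⟨p, hp⟩, congrArg Subtype.val ((genArcEquiv R).symm_apply_apply _)⟩

theorem vertex_src (e : (generator R).E) : vertex R ((generator R).src e) = (arc R e).1 :=
  congrArg Subtype.val ((genVertEquiv R).symm_apply_apply _)

theorem vertex_tgt (hR : IsPhyloNet R) (hc : OnlyTrivialCutArcs R) (e : (generator R).E) :
    vertex R ((generator R).tgt e) = chainTarget R (arc R e).2 := by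
  have h := (chainTarget_mem_genVerts hR hc (arc_mem e).2.2).1
  simp only [vertex, arc, generator] at h ⊢
  rw [dif_pos h]
  exact congrArg Subtype.val ((genVertEquiv R).symm_apply_apply _)

theorem mOutDeg_eq (w : (generator R).W) :
    mOutDeg (generator R) w = {c | R (vertex R w) c ∧ ¬ IsLf R c}.ncard := by
  refine Set.ncard_congr (fun e _ => (arc R e).2) ?_ ?_ ?_
  · rintro e (he : (generator R).src e = w)
    rw [← he, vertex_src]
    exact ⟨(arc_mem e).1, (arc_mem e).2.2⟩
  · rintro e e' (he : (generator R).src e = w) (he' : (generator R).src e' = w) h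
    refine arc_injective (Prod.ext ?_ h)
    rw [← vertex_src, ← vertex_src, he, he']
  · rintro c ⟨hwc, hcl⟩
    obtain ⟨e, he⟩ := exists_arc_eq (show (vertex R w, c) ∈ genArcs R from
      ⟨hwc, vertex_mem w, hcl⟩)
    exact ⟨e, vertex_injective (by rw [vertex_src, he]), by rw [he]⟩

theorem mInDeg_eq (hR : IsPhyloNet R) (hc : OnlyTrivialCutArcs R) (w : (generator R).W) :
    mInDeg (generator R) w = inDeg R (vertex R w) := by
  have htgt : ∀ e, (generator R).tgt e = w ↔ chainTarget R (arc R e).2 = vertex R w := fun e =>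
    ⟨fun h => h ▸ (vertex_tgt hR hc e).symm,
      fun h => vertex_injective ((vertex_tgt hR hc e).trans h)⟩
  refine Set.ncard_congr (fun e _ => lastBefore R (arc R e)) ?_ ?_ ?_
  · intro e he
    exact (htgt e).1 he ▸ rel_lastBefore hR hc (arc_mem e)
  · intro e e' he he' h
    exact arc_injective (lastBefore_injOn hR hc (arc_mem e) (arc_mem e')
      (((htgt e).1 he).trans ((htgt e').1 he').symm) h)
  · intro x hx
    obtain ⟨p, hp, hpt, hpx⟩ := exists_lastBefore_eq hR hc (vertex_mem w) hx
    obtain ⟨e, rfl⟩ := exists_arc_eq hp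
    exact ⟨e, (htgt e).2 hpt, hpx⟩

theorem mAdj_iff (hR : IsPhyloNet R) (hc : OnlyTrivialCutArcs R) {w w' : (generator R).W} :
    mAdj (generator R) w w' ↔ genAdj R (vertex R w) (vertex R w') := by
  constructor
  · rintro ⟨e, rfl, rfl⟩
    exact ⟨(arc R e).2, by rw [vertex_src]; exact arc_mem e, (vertex_tgt hR hc e).symm⟩
  · rintro ⟨c, hwc, ht⟩
    obtain ⟨e, he⟩ := exists_arc_eq hwc
    exact ⟨e, vertex_injective (by rw [vertex_src, he]),
      vertex_injective (by rw [vertex_tgt hR hc, he, ht])⟩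

theorem reflTransGen_avoid (hR : IsPhyloNet R) (hc : OnlyTrivialCutArcs R) (v : V)
    {a b : (generator R).W} (ha : vertex R a ≠ v) (hb : vertex R b ≠ v) :
    ReflTransGen (fun p q => vertex R p ≠ v ∧ vertex R q ≠ v ∧
      (mAdj (generator R) p q ∨ mAdj (generator R) q p)) a b := by
  have hwalk := reflTransGen_proj hR hc v (hc.connOn_compl_netLeaves_diff hR v (vertex R a)
    ⟨not_isLf_of_mem_genVerts hR (vertex_mem a), ha⟩ (vertex R b)
    ⟨not_isLf_of_mem_genVerts hR (vertex_mem b), hb⟩)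
  rw [proj_of_mem (vertex_mem a), proj_of_mem (vertex_mem b)] at hwalk
  refine ReflTransGen.mono (fun p q h => ⟨h.1, h.2.1, ?_⟩) _ _
    (ReflTransGen.of_map vertex_injective ?_ hwalk)
  · rintro x y ⟨-, -, ⟨c, hxc, rfl⟩ | ⟨c, hyc, -⟩⟩
    · exact exists_vertex_eq (chainTarget_mem_genVerts hR hc hxc.2.2).1
    · exact exists_vertex_eq hyc.2.1
  · rw [mAdj_iff hR hc, mAdj_iff hR hc]
    exact h.2.2

theorem transGen_of_mAdj (hR : IsPhyloNet R) (hc : OnlyTrivialCutArcs R)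
    {w w' : (generator R).W} (h : mAdj (generator R) w w') :
    TransGen R (vertex R w) (vertex R w') := by
  obtain ⟨e, rfl, rfl⟩ := h
  rw [vertex_src, vertex_tgt hR hc]
  exact .head' (arc_mem e).1 (chainTarget_mem_genVerts hR hc (arc_mem e).2.2).2

theorem mOutDeg_le_outDeg (w : (generator R).W) :
    mOutDeg (generator R) w ≤ outDeg R (vertex R w) := by
  rw [mOutDeg_eq]
  exact Set.ncard_le_ncard (fun c hc => hc.1) (Set.toFinite _)

theorem mOutDeg_eq_outDeg {w : (generator R).W} (h : ∀ c, R (vertex R w) c → ¬ IsLf R c) :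
    mOutDeg (generator R) w = outDeg R (vertex R w) := by
  rw [mOutDeg_eq]
  congr 1
  ext c
  exact ⟨fun hc => hc.1, fun hc => ⟨hc, h c hc⟩⟩

theorem mDeg_cases (hR : IsPhyloNet R) (hc : OnlyTrivialCutArcs R) (hrec : ∃ w, inDeg R w = 2)
    (w : (generator R).W) :
    (mInDeg (generator R) w = 0 ∧ mOutDeg (generator R) w = 2) ∨
      (mInDeg (generator R) w = 2 ∧ mOutDeg (generator R) w ≤ 1) ∨
      (mInDeg (generator R) w = 1 ∧ mOutDeg (generator R) w = 2) := by
  rw [mInDeg_eq hR hc]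
  have hle := mOutDeg_le_outDeg w
  rcases hR.2.2 (vertex R w) with ⟨hin, hout⟩ | ⟨hin, hout⟩ | ⟨hin, hout⟩ | ⟨-, hout⟩
  · exact .inl ⟨hin, (mOutDeg_eq_outDeg fun c =>
      not_isLf_of_root_child hR hc hrec hin).trans hout⟩
  · refine .inr (.inr ⟨hin, (mOutDeg_eq_outDeg ?_).trans hout⟩)
    rcases vertex_mem w with h | h | h
    · omega
    · omega
    · exact h.2
  · exact .inr (.inl ⟨hin, hout ▸ hle⟩)
  · exact absurd hout (not_isLf_of_mem_genVerts hR (vertex_mem w))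

theorem isGenerator (hR : IsPhyloNet R) (hc : OnlyTrivialCutArcs R) (hrec : ∃ w, inDeg R w = 2)
    {k : ℕ} (hk : {v | inDeg R v = 2}.ncard = k) : IsGenerator k (generator R) := by
  obtain ⟨ℓ, hℓ⟩ := hR.exists_isLf
  have hne : ∀ w, vertex R w ≠ ℓ := fun w h =>
    not_isLf_of_mem_genVerts hR (vertex_mem w) (h ▸ hℓ)
  refine ⟨inferInstanceAs (Finite (Fin _)), inferInstanceAs (Finite (Fin _)),
    fun w h => hR.1 _ (TransGen.lift' (vertex R) (fun _ _ => transGen_of_mAdj hR hc) _ _ h),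
    fun a b => ReflTransGen.mono (fun _ _ h => h.2.2) _ _
      (reflTransGen_avoid hR hc ℓ (hne a) (hne b)),
    fun w a b ha hb => ReflTransGen.mono
      (fun p q h => ⟨fun hp => h.1 (hp ▸ rfl), fun hq => h.2.1 (hq ▸ rfl), h.2.2⟩) _ _
      (reflTransGen_avoid hR hc _ (vertex_injective.ne ha) (vertex_injective.ne hb)),
    ?_, ?_, mDeg_cases hR hc hrec⟩
  · obtain ⟨r, hr, hru⟩ := hR.2.1
    obtain ⟨w, rfl⟩ := exists_vertex_eq (show r ∈ genVerts R from .inl hr)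
    exact ⟨w, (mInDeg_eq hR hc w).trans hr, fun w' hw' =>
      vertex_injective (hru _ ((mInDeg_eq hR hc w').symm.trans hw'))⟩
  · rw [← hk]
    refine Set.ncard_congr (fun w _ => vertex R w) (fun w hw => (mInDeg_eq hR hc w).symm.trans hw)
      (fun _ _ _ _ h => vertex_injective h) (fun v hv => ?_)
    obtain ⟨w, rfl⟩ := exists_vertex_eq (show v ∈ genVerts R from .inr (.inl hv))
    exact ⟨w, (mInDeg_eq hR hc w).trans hv, rfl⟩

theorem fullPath_eq (hR : IsPhyloNet R) (hc : OnlyTrivialCutArcs R) (e : (generator R).E) :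
    fullPath (generator R) (vertex R) (fun e => subdivChain R (arc R e).2) e =
      (arc R e).1 :: subdivChain R (arc R e).2 ++ [chainTarget R (arc R e).2] := by
  rw [fullPath, vertex_src, vertex_tgt hR hc]

theorem exists_adjac (hR : IsPhyloNet R) (hc : OnlyTrivialCutArcs R) {a b : V} (hab : R a b)
    (hb : ¬ IsLf R b) :
    ∃ e, Adjac (fullPath (generator R) (vertex R) (fun e => subdivChain R (arc R e).2) e) a b := by
  obtain ⟨t, ht, -⟩ := subdivChain_append_chainTarget hR hc hb
  by_cases ha : a ∈ genVerts R
  · obtain ⟨e, he⟩ := exists_arc_eq (show (a, b) ∈ genArcs R from ⟨hab, ha, hb⟩)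
    refine ⟨e, [], t, ?_⟩
    rw [fullPath_eq hR hc, he, List.cons_append, ht]
    rfl
  · have has := isSubdiv_of_rel hab ha
    obtain ⟨hp, hach⟩ := firstArc_mem_genArcs hR hc has
    obtain ⟨e, he⟩ := exists_arc_eq hp
    obtain ⟨l, hl⟩ := exists_subdivChain_eq_append hR hc hach
    refine ⟨e, (arc R e).1 :: l, t, ?_⟩
    rw [fullPath_eq hR hc, he, hl, ← (mem_subdivChain hR hc hach).2.1,
      subdivChain_of_isSubdiv hR hc has hab hb, chainTarget_of_isSubdiv hR hc has hab hb]
    simp only [List.cons_append, List.append_assoc, ht]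

theorem exists_isLf_child (hR : IsPhyloNet R) {w : (generator R).W}
    (hw : mOutDeg (generator R) w = 0) : ∃ ℓ, IsLf R ℓ ∧ R (vertex R w) ℓ := by
  obtain ⟨c, hwc⟩ := exists_rel_of_not_isLf (not_isLf_of_mem_genVerts hR (vertex_mem w))
  refine ⟨c, by_contra fun hcl => ?_, hwc⟩
  rw [mOutDeg_eq] at hw
  exact ((Set.ncard_pos (Set.toFinite _)).2 ⟨c, show R _ c ∧ ¬ IsLf R c from ⟨hwc, hcl⟩⟩).ne' hw

theorem mDeg_of_isLf_child (hR : IsPhyloNet R) (hc : OnlyTrivialCutArcs R)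
    (hrec : ∃ w, inDeg R w = 2) {w : (generator R).W} {ℓ : V} (hwℓ : R (vertex R w) ℓ)
    (hℓ : IsLf R ℓ) : mInDeg (generator R) w = 2 ∧ mOutDeg (generator R) w = 0 := by
  rw [mInDeg_eq hR hc, mOutDeg_eq]
  rcases hR.2.2 (vertex R w) with ⟨hin, -⟩ | ⟨hin, -⟩ | ⟨hin, hout⟩ | ⟨-, hout⟩
  · exact absurd hℓ (not_isLf_of_root_child hR hc hrec hin hwℓ)
  · rcases vertex_mem w with h | h | h
    · omega
    · omega
    · exact absurd hℓ (h.2 ℓ hwℓ)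
  · obtain ⟨c, -, hc'⟩ := exists_eq_of_ncard_eq_one hout
    refine ⟨hin, (Set.ncard_eq_zero (Set.toFinite _)).2
      (Set.eq_empty_of_forall_notMem fun y (hy : R _ y ∧ _) => hy.2 ?_)⟩
    exact (hc' y hy.1).trans (hc' ℓ hwℓ).symm ▸ hℓ
  · exact absurd hout (not_isLf_of_mem_genVerts hR (vertex_mem w))

theorem exists_mem_subdivChain (hR : IsPhyloNet R) (hc : OnlyTrivialCutArcs R) {v : V}
    (hv : IsSubdiv R v) : ∃ e, v ∈ subdivChain R (arc R e).2 := by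
  obtain ⟨hp, hvp⟩ := firstArc_mem_genArcs hR hc hv
  obtain ⟨e, he⟩ := exists_arc_eq hp
  exact ⟨e, he ▸ hvp⟩

noncomputable def leafHanging (hR : IsPhyloNet R) (hc : OnlyTrivialCutArcs R)
    (hrec : ∃ w, inDeg R w = 2) : LeafHanging (generator R) R where
  φ := vertex R
  ψ e := subdivChain R (arc R e).2
  φ_injective := vertex_injective
  isChain e := by
    rw [fullPath_eq hR hc]
    exact isChain_cons_subdivChain hR hc (arc_mem e).1 (arc_mem e).2.2
  nodup _ := subdivChain_nodup hR hc _
  disjoint e e' hne x hx hx' := hne (arc_injective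
    ((firstArc_eq_of_mem_subdivChain hR hc (arc_mem e) hx).symm.trans
      (firstArc_eq_of_mem_subdivChain hR hc (arc_mem e') hx')))
  ne_φ _ _ hx w h := (mem_subdivChain hR hc hx).1.1 (h ▸ vertex_mem w)
  leaf_child _ _ hx := by
    obtain ⟨ℓ, -, hℓ, hxℓ, -⟩ := (mem_subdivChain hR hc hx).1.exists_children hR hc
    exact ⟨ℓ, hℓ, hxℓ⟩
  leaf_child_of_sink _ _ hw := exists_isLf_child hR hw
  cover v := by
    by_cases hl : IsLf R v
    · exact .inr (.inr hl)
    by_cases hv : v ∈ genVerts R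
    · obtain ⟨w, rfl⟩ := exists_vertex_eq hv
      exact .inl ⟨w, rfl⟩
    · exact .inr (.inl (exists_mem_subdivChain hR hc ⟨hv, hl⟩))
  arc a b hab := by
    by_cases hb : IsLf R b
    · refine .inr ⟨hb, ?_⟩
      by_cases ha : a ∈ genVerts R
      · obtain ⟨w, rfl⟩ := exists_vertex_eq ha
        exact .inr ⟨w, (mDeg_of_isLf_child hR hc hrec hab hb).1,
          (mDeg_of_isLf_child hR hc hrec hab hb).2, rfl⟩
      · exact .inl (exists_mem_subdivChain hR hc (isSubdiv_of_rel hab ha))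
    · exact .inl (exists_adjac hR hc hab hb)

end generator

theorem simpleLevel_of_onlyTrivialCutArcs {k : ℕ} (hR : IsPhyloNet R)
    (hc : OnlyTrivialCutArcs R) (hlev : LevelK k R) (hstrict : ¬ LevelK (k - 1) R) :
    SimpleLevel k R :=
  have hrec := exists_inDeg_eq_two_of_not_levelK hstrict
  ⟨generator R, generator.isGenerator hR hc hrec (ncard_inDeg_eq_two hR hc hlev hstrict),
    simpleFrom_iff.2 ⟨hR, ⟨generator.leafHanging hR hc hrec⟩⟩⟩

end UnderlyingGenerator

end Phylo

open Phylo in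
theorem stmt6_general {V : Type*} [Fintype V] (k : ℕ) (R : V → V → Prop)
    (hgood : GoodNet R) (hlev : LevelK k R) (hstrict : ¬ LevelK (k - 1) R) :
    SimpleLevel k R ↔ ¬ ∃ u v : V, CutArc R u v ∧ ¬ IsLf R v := by
  refine ⟨fun hsim ⟨u, v, huv, hv⟩ => hsim.not_cutArc huv.1 hv huv, fun hnc => ?_⟩
  exact simpleLevel_of_onlyTrivialCutArcs hgood.1
    (fun u v huv => by_contra fun hv => hnc ⟨u, v, huv, hv⟩) hlev hstrict

open Phylo in
/-- A strict level-k network (k ≥ 1) is a simple level-k network iff it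
contains no nontrivial cut-arcs (a cut-arc `(u,v)` being trivial when `v` is a leaf). -/
theorem stmt6 {V : Type*} [Fintype V] (k : ℕ) (hk : 1 ≤ k) (R : V → V → Prop)
    (hgood : GoodNet R) (hlev : LevelK k R) (hstrict : ¬ LevelK (k - 1) R) :
    SimpleLevel k R ↔ ¬ ∃ u v : V, CutArc R u v ∧ ¬ IsLf R v :=
  stmt6_general k R hgood hlev hstrict
end

section
/- There is exactly one simple level-1 generator up to isomorphism: the multigraph on two vertices r and s with two parallel arcs from r to s. -/
open Phylo

abbrev B2 : MultiDigraph := ⟨Bool, Bool, fun _ => false, fun _ => true⟩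

lemma B2_in : ∀ v : B2.W, mInDeg B2 v = if v = true then 2 else 0 := by
  intro v
  cases v
  · simp [mInDeg, B2]
  · show ({e : Bool | true = true}).ncard = 2
    simp [Set.ncard_univ]

lemma B2_out : ∀ v : B2.W, mOutDeg B2 v = if v = false then 2 else 0 := by
  intro v
  cases v
  · show ({e : Bool | false = false}).ncard = 2
    simp [Set.ncard_univ]
  · simp [mOutDeg, B2]

lemma B2_adj : ∀ a b : B2.W, mAdj B2 a b ↔ (a = false ∧ b = true) := by
  intro a b
  constructor
  · rintro ⟨e, h1, h2⟩; exact ⟨h1.symm, h2.symm⟩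
  · rintro ⟨rfl, rfl⟩; exact ⟨true, rfl, rfl⟩

lemma B2_gen : IsGenerator 1 B2 := by
  refine ⟨inferInstanceAs (Finite Bool), inferInstanceAs (Finite Bool), ?_, ?_, ?_,
    ⟨false, ?_, ?_⟩, ?_, ?_⟩
  · intro v hv
    have key : ∀ a b : B2.W, Relation.TransGen (mAdj B2) a b → a = false ∧ b = true := by
      intro a b h
      induction h with
      | single h => exact (B2_adj _ _).1 h
      | tail h h2 ih =>
        obtain ⟨hb, -⟩ := (B2_adj _ _).1 h2
        obtain ⟨-, hb'⟩ := ih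
        simp_all
    obtain ⟨h1, h2⟩ := key v v hv
    subst h1
    exact Bool.noConfusion h2
  · intro a b
    match a, b with
    | false, false => exact .refl
    | true, true => exact .refl
    | false, true => exact .single (Or.inl ⟨true, rfl, rfl⟩)
    | true, false => exact .single (Or.inr ⟨true, rfl, rfl⟩)
  · intro w a b ha hb
    have : a = b := by revert ha hb; cases a <;> cases b <;> cases w <;> simp
    subst this; exact .refl
  · simp [B2_in]
  · intro y hy
    cases y
    · rfl
    · simp [B2_in] at hy
  · have : {v : B2.W | mInDeg B2 v = 2} = {true} := by
      ext v; cases v <;> simp [B2_in]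
    rw [this, Set.ncard_singleton]
  · intro v
    cases v
    · left; simp [B2_in, B2_out]
    · right; left; simp [B2_in, B2_out]

lemma part2 (G : MultiDigraph) (h : IsGenerator 1 G) : MIso G B2 := by
  classical
  obtain ⟨hWf, hEf, hacyc, hconn, hbic, ⟨r, hr0, hru⟩, hone, htri⟩ := h
  haveI := hWf; haveI := hEf
  haveI : Fintype G.W := Fintype.ofFinite _
  haveI : Fintype G.E := Fintype.ofFinite _
  obtain ⟨s, hs⟩ := Set.ncard_eq_one.mp hone
  have hs2 : mInDeg G s = 2 := by
    have : s ∈ {v | mInDeg G v = 2} := by rw [hs]; rfl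
    exact this
  have hrs : r ≠ s := by
    intro h; rw [h, hs2] at hr0; omega
  have hin2 : ∀ v, mInDeg G v = 2 → v = s := by
    intro v hv
    have : v ∈ ({s} : Set G.W) := hs ▸ hv
    exact this
  have hinF : ∀ v, mInDeg G v = (Finset.univ.filter fun e => G.tgt e = v).card := by
    intro v; rw [mInDeg, Set.ncard_eq_toFinset_card', Set.toFinset_setOf]
  have houtF : ∀ v, mOutDeg G v = (Finset.univ.filter fun e => G.src e = v).card := by
    intro v; rw [mOutDeg, Set.ncard_eq_toFinset_card', Set.toFinset_setOf]
  have hE1 : Fintype.card G.E = ∑ v, (Finset.univ.filter fun e => G.tgt e = v).card := by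
    rw [← Finset.card_univ]
    exact Finset.card_eq_sum_card_fiberwise (fun e _ => Finset.mem_univ _)
  have hE2 : Fintype.card G.E = ∑ v, (Finset.univ.filter fun e => G.src e = v).card := by
    rw [← Finset.card_univ]
    exact Finset.card_eq_sum_card_fiberwise (fun e _ => Finset.mem_univ _)
  set S : Finset G.W := Finset.univ \ {r, s} with hSdef
  have hSr : r ∉ S := by simp [hSdef]
  have hSs : s ∉ S := by simp [hSdef]
  have huniv : (Finset.univ : Finset G.W) = insert r (insert s S) := by
    ext v
    simp only [Finset.mem_univ, Finset.mem_insert, hSdef, Finset.mem_sdiff,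
      Finset.mem_insert, Finset.mem_singleton, true_iff, true_and]
    tauto
  have hrins : r ∉ insert s S := by simp [hrs, hSr]
  have hSdeg : ∀ v ∈ S, mInDeg G v = 1 ∧ mOutDeg G v = 2 := by
    intro v hv
    have hvr : v ≠ r := by rintro rfl; exact hSr hv
    have hvs : v ≠ s := by rintro rfl; exact hSs hv
    rcases htri v with ⟨h1, h2⟩ | ⟨h1, h2⟩ | ⟨h1, h2⟩
    · exact absurd (hru v h1) hvr
    · exact absurd (hin2 v h1) hvs
    · exact ⟨h1, h2⟩
  have hrout : mOutDeg G r = 2 := by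
    rcases htri r with ⟨h1, h2⟩ | ⟨h1, h2⟩ | ⟨h1, h2⟩
    · exact h2
    · simp [hr0] at h1
    · simp [hr0] at h1
  have hsout : mOutDeg G s ≤ 1 := by
    rcases htri s with ⟨h1, h2⟩ | ⟨h1, h2⟩ | ⟨h1, h2⟩
    · simp [hs2] at h1
    · exact h2
    · simp [hs2] at h1
  have hsum_in : Fintype.card G.E = 2 + S.card := by
    rw [hE1, huniv, Finset.sum_insert hrins, Finset.sum_insert hSs,
      ← hinF, ← hinF, hr0, hs2]
    have : ∑ v ∈ S, (Finset.univ.filter fun e => G.tgt e = v).card = ∑ v ∈ S, 1 := by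
      refine Finset.sum_congr rfl fun v hv => ?_
      rw [← hinF, (hSdeg v hv).1]
    rw [this, Finset.sum_const, smul_eq_mul]
    ring
  have hsum_out : Fintype.card G.E = 2 + mOutDeg G s + 2 * S.card := by
    rw [hE2, huniv, Finset.sum_insert hrins, Finset.sum_insert hSs,
      ← houtF, ← houtF, hrout]
    have : ∑ v ∈ S, (Finset.univ.filter fun e => G.src e = v).card = ∑ v ∈ S, 2 := by
      refine Finset.sum_congr rfl fun v hv => ?_
      rw [← houtF, (hSdeg v hv).2]
    rw [this, Finset.sum_const, smul_eq_mul]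
    ring
  have hScard : S.card = 0 := by omega
  have hsout0 : mOutDeg G s = 0 := by omega
  have hEcard : Fintype.card G.E = 2 := by omega
  have hvrs : ∀ v : G.W, v = r ∨ v = s := by
    intro v
    by_contra hc
    push_neg at hc
    have : v ∈ S := by simp [hSdef, hc.1, hc.2]
    rw [Finset.card_eq_zero] at hScard
    simp [hScard] at this
  have htgt : ∀ e, G.tgt e = s := by
    intro e
    rcases hvrs (G.tgt e) with h | h
    · exfalso
      have hm : e ∈ Finset.univ.filter fun e => G.tgt e = r := by simp [h]
      have hc : (Finset.univ.filter fun e => G.tgt e = r).card = 0 := by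
        rw [← hinF, hr0]
      rw [Finset.card_eq_zero] at hc
      simp [hc] at hm
    · exact h
  have hsrc : ∀ e, G.src e = r := by
    intro e
    rcases hvrs (G.src e) with h | h
    · exact h
    · exfalso
      have hm : e ∈ Finset.univ.filter fun e => G.src e = s := by simp [h]
      have hc : (Finset.univ.filter fun e => G.src e = s).card = 0 := by
        rw [← houtF, hsout0]
      rw [Finset.card_eq_zero] at hc
      simp [hc] at hm
  have hcardeq : Fintype.card G.E = Fintype.card Bool := by simp [hEcard]
  obtain ⟨g⟩ := Fintype.card_eq.mp hcardeq
  refine ⟨fun w => if w = s then true else false, g, ⟨?_, ?_⟩, g.bijective, ?_, ?_⟩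
  · intro a b hab
    rcases hvrs a with rfl | rfl <;> rcases hvrs b with rfl | rfl <;>
      simp [hrs] at hab <;> simp
  · intro b
    cases b
    · exact ⟨r, by simp [hrs]⟩
    · exact ⟨s, by simp⟩
  · intro e
    show false = _
    rw [hsrc]
    simp [hrs]
  · intro e
    show true = _
    rw [htgt]
    simp

open Phylo in
/-- There is exactly one simple level-1 generator up to isomorphism:
the multigraph on two vertices `r` (= `false`) and `s` (= `true`) with two parallel
arcs from `r` to `s`. -/
theorem stmt7 :
    IsGenerator 1 (⟨Bool, Bool, fun _ => false, fun _ => true⟩ : MultiDigraph) ∧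
    ∀ G : MultiDigraph, IsGenerator 1 G →
      MIso G ⟨Bool, Bool, fun _ => false, fun _ => true⟩ := by
  exact ⟨B2_gen, fun G h => part2 G h⟩
end
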